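/- arXiv:1409.2218 — 10 statements merged into one kernel-verified Lean document; each statement's English description precedes it below -/
import Mathlib

section
/- Let p be a prime number and S = {p}. For an integer n ≥ 3, there exist S-units u_1, …, u_n such that u_1 + ⋯ + u_n = 0, no nonempty proper subfamily of the u_i sums to 0, and u_i + u_{i+1} + ⋯ + u_j is not an S-unit for all 1 ≤ i < j ≤ n with (i, j) ∉ {(1, n−1), (2, n)}, if and only if n ≡ 2 (mod p − 1). (Equivalently: the S-unit graph has a nondegenerate induced cycle of length n if and only if n ≡ 2 (mod p − 1).) -/
/-- A rational number `u` is an `S`-unit if `u ≠ 0` and every prime dividing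
its numerator or its denominator (in lowest terms) lies in `S`. -/
def IsSUnit (S : Finset ℕ) (u : ℚ) : Prop :=
  u ≠ 0 ∧ ∀ p : ℕ, p.Prime → ((p : ℤ) ∣ u.num ∨ p ∣ u.den) → p ∈ S

/-!
Every `S`-unit is `±p ^ e` with `e ∈ ℤ`. In a minimal vanishing sum of such terms with at least
three terms, no two terms are opposite, so the terms of smallest absolute value `|x|` are all equal
to `x`; every other term is a multiple of `p x`, hence the number of copies of `x` is divisible by
`p`. Merging `p` of them into the single term `p x` gives a minimal vanishing sum with `p - 1` fewer
terms, and the descent stops at two terms `x, -x`.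

Conversely, for `n = (p - 1) k + 2` walk through the integers with a single nonzero base-`p` digit,
`1, 2, …, p - 1, p, 2p, …, p ^ k`, and close the cycle through `p ^ k + 1`. Consecutive vertices
differ by `±p ^ e`, while two non-consecutive ones differ by `p ^ v x` with `x ≥ 2` prime to `p`.
-/

open Finset

section SUnit

variable {p : ℕ}

theorem IsSUnit.neg {S : Finset ℕ} {u : ℚ} (h : IsSUnit S u) : IsSUnit S (-u) :=
  ⟨neg_ne_zero.mpr h.1, fun q hq hdvd => h.2 q hq (by simpa using hdvd)⟩

theorem isSUnit_pow (hp : p.Prime) (e : ℕ) : IsSUnit {p} ((p : ℚ) ^ e) := by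
  refine ⟨pow_ne_zero _ (Nat.cast_ne_zero.mpr hp.ne_zero), fun q hq hdvd => mem_singleton.mpr ?_⟩
  rw [← Nat.cast_pow, Rat.num_natCast, Rat.den_natCast, Int.natCast_dvd_natCast] at hdvd
  rcases hdvd with h | h
  · exact (Nat.prime_dvd_prime_iff_eq hq hp).mp (hq.dvd_of_dvd_pow h)
  · exact absurd (Nat.le_of_dvd one_pos h) hq.one_lt.not_ge

theorem IsSUnit.abs_eq_zpow (hp : p.Prime) {u : ℚ} (h : IsSUnit {p} u) :
    ∃ e : ℤ, |u| = (p : ℚ) ^ e := by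
  obtain ⟨hu, hS⟩ := h
  obtain ⟨a, ha⟩ : ∃ a, u.num.natAbs = p ^ a :=
    ⟨_, Nat.eq_prime_pow_of_unique_prime_dvd (Int.natAbs_ne_zero.mpr (Rat.num_ne_zero.mpr hu))
      fun hd hdvd => mem_singleton.mp (hS _ hd (Or.inl (Int.natCast_dvd.mpr hdvd)))⟩
  obtain ⟨b, hb⟩ : ∃ b, u.den = p ^ b :=
    ⟨_, Nat.eq_prime_pow_of_unique_prime_dvd u.den_nz
      fun hd hdvd => mem_singleton.mp (hS _ hd (Or.inr hdvd))⟩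
  refine ⟨a - b, ?_⟩
  rw [zpow_sub₀ (Nat.cast_ne_zero.mpr hp.ne_zero), zpow_natCast, zpow_natCast, ← Nat.cast_pow,
    ← Nat.cast_pow, ← ha, ← hb, Nat.cast_natAbs, ← abs_of_pos (a := (u.den : ℚ)) (by positivity),
    Int.cast_abs, ← abs_div, Rat.num_div_den]

theorem not_isSUnit_pow_mul (v : ℕ) {x : ℤ} (hpx : ¬ (p : ℤ) ∣ x)
    (hx : x.natAbs ≠ 1) : ¬ IsSUnit {p} ((p : ℚ) ^ v * x) := by
  rintro ⟨-, hS⟩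
  obtain ⟨q, hq, hqx⟩ := Nat.exists_prime_and_dvd hx
  have hqx : (q : ℤ) ∣ x := Int.natCast_dvd.mpr hqx
  have hnum : (q : ℤ) ∣ ((p : ℚ) ^ v * x).num := by
    rw [show (p : ℚ) ^ v * x = ((p ^ v * x : ℤ) : ℚ) by push_cast; rfl, Rat.num_intCast]
    exact hqx.mul_left _
  rw [mem_singleton.mp (hS q hq (Or.inl hnum))] at hqx
  exact hpx hqx

end SUnit

section MinimalZeroSum

variable {ι α : Type*}

structure IsMinimalZeroSum [AddCommMonoid α] (s : Finset ι) (u : ι → α) : Prop where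
  nonempty : s.Nonempty
  sum_eq_zero : ∑ i ∈ s, u i = 0
  eq_of_sum_eq_zero : ∀ t ⊆ s, t.Nonempty → ∑ i ∈ t, u i = 0 → t = s

theorem isMinimalZeroSum_of_pos [AddCommGroup α] [PartialOrder α] [IsOrderedAddMonoid α]
    [DecidableEq ι] {s : Finset ι} {u : ι → α} {i₀ : ι} (hi₀ : i₀ ∈ s)
    (hpos : ∀ i ∈ s, i ≠ i₀ → 0 < u i) (hsum : ∑ i ∈ s, u i = 0) : IsMinimalZeroSum s u := by
  refine ⟨⟨i₀, hi₀⟩, hsum, fun t hts ht h0 => ?_⟩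
  by_contra hne
  by_cases hi₀t : i₀ ∈ t
  · have hrest : 0 < ∑ i ∈ s \ t, u i :=
      sum_pos (fun i hi => hpos i (mem_sdiff.mp hi).1 fun h => (mem_sdiff.mp hi).2 (h ▸ hi₀t))
        (sdiff_nonempty.mpr fun hst => hne (hts.antisymm hst))
    rw [← sum_sdiff hts, h0, add_zero] at hsum
    exact hrest.ne' hsum
  · exact (sum_pos (fun i hi => hpos i (hts hi) fun h => hi₀t (h ▸ hi)) ht).ne' h0

theorem IsMinimalZeroSum.merge [AddCommMonoid α] [DecidableEq ι] {s : Finset ι} {u : ι → α}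
    (hs : IsMinimalZeroSum s u) {i₀ : ι} (hi₀ : i₀ ∈ s) {R : Finset ι} (hR : R ⊆ s)
    (hi₀R : i₀ ∉ R) :
    IsMinimalZeroSum (s \ R) (Function.update u i₀ (u i₀ + ∑ i ∈ R, u i)) := by
  set u' := Function.update u i₀ (u i₀ + ∑ i ∈ R, u i)
  have hsum_merged : ∀ t ⊆ s \ R, i₀ ∈ t → ∑ i ∈ t, u' i = ∑ i ∈ t ∪ R, u i := fun t ht hi₀t => by
    rw [sum_update_of_mem hi₀t, sum_union (disjoint_of_subset_left ht disjoint_sdiff_self_left),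
      ← add_sum_erase t u hi₀t, sdiff_singleton_eq_erase]
    abel
  refine ⟨⟨i₀, mem_sdiff.mpr ⟨hi₀, hi₀R⟩⟩, ?_, fun t ht htne h0 => ?_⟩
  · rw [hsum_merged _ subset_rfl (mem_sdiff.mpr ⟨hi₀, hi₀R⟩), sdiff_union_of_subset hR,
      hs.sum_eq_zero]
  by_cases hi₀t : i₀ ∈ t
  · rw [hsum_merged t ht hi₀t] at h0
    have htR := hs.eq_of_sum_eq_zero (t ∪ R) (union_subset (ht.trans sdiff_subset) hR)
      (htne.mono subset_union_left) h0
    rw [← htR, union_sdiff_cancel_right (disjoint_of_subset_left ht disjoint_sdiff_self_left)]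
  · rw [sum_update_of_notMem hi₀t] at h0
    have hts := hs.eq_of_sum_eq_zero t (ht.trans sdiff_subset) htne h0
    exact absurd (hts ▸ hi₀) hi₀t

theorem IsMinimalZeroSum.ne_neg [AddCommGroup α] [IsAddTorsionFree α] [DecidableEq ι]
    {s : Finset ι} {u : ι → α} (hs : IsMinimalZeroSum s u) (hcard : 2 < #s) {i j : ι}
    (hi : i ∈ s) (hj : j ∈ s) : u j ≠ -u i := by
  intro hji
  have hpair : ∑ k ∈ {i, j}, u k = 0 := by
    by_cases hij : i = j
    · subst hij
      simpa [self_eq_neg] using hji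
    · rw [sum_pair hij, hji, add_neg_cancel]
  have := hs.eq_of_sum_eq_zero {i, j} (insert_subset hi (singleton_subset_iff.mpr hj))
    (insert_nonempty _ _) hpair
  have := card_le_two (a := i) (b := j)
  grind

end MinimalZeroSum

section MinimalZeroSumOfPowers

variable {ι : Type*} [DecidableEq ι] {p : ℕ} {s : Finset ι} {u : ι → ℚ}

theorem mem_zmultiples_of_abs_eq_zpow (hp : 0 < p) {x y : ℚ} {a b : ℤ}
    (hx : |x| = (p : ℚ) ^ a) (hy : |y| = (p : ℚ) ^ b) (hab : a < b) :
    y ∈ AddSubgroup.zmultiples ((p : ℚ) * x) := by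
  obtain ⟨m, rfl⟩ : ∃ m : ℕ, b = a + 1 + m := ⟨(b - a - 1).toNat, by omega⟩
  have hp0 : (p : ℚ) ≠ 0 := by positivity
  have habs : |y| = |((p : ℤ) ^ m : ℤ) * ((p : ℚ) * x)| := by
    rw [hy, abs_mul, abs_mul, hx, Int.cast_pow, Int.cast_natCast, abs_pow, Nat.abs_cast,
      zpow_add₀ hp0, zpow_add₀ hp0, zpow_one, zpow_natCast]
    ring
  rw [AddSubgroup.mem_zmultiples_iff]
  rcases abs_eq_abs.mp habs with h | h
  · exact ⟨(p : ℤ) ^ m, by rw [h, zsmul_eq_mul]⟩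
  · exact ⟨-(p : ℤ) ^ m, by rw [h, zsmul_eq_mul, Int.cast_neg, neg_mul]⟩

theorem IsMinimalZeroSum.dvd_card_filter_eq (hp : 1 < p) (hs : IsMinimalZeroSum s u)
    (hcard : 2 < #s) (hu : ∀ i ∈ s, ∃ e : ℤ, |u i| = (p : ℚ) ^ e) {i₀ : ι} (hi₀ : i₀ ∈ s)
    (hmin : ∀ i ∈ s, |u i₀| ≤ |u i|) : p ∣ #{i ∈ s | u i = u i₀} := by
  obtain ⟨a, ha⟩ := hu i₀ hi₀
  have hu₀ : u i₀ ≠ 0 := fun h => (zpow_pos (by positivity : (0 : ℚ) < p) a).ne' (by simp [← ha, h])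
  have hrest : ∑ i ∈ s with ¬u i = u i₀, u i ∈ AddSubgroup.zmultiples ((p : ℚ) * u i₀) := by
    refine AddSubgroup.sum_mem _ fun i hi => ?_
    obtain ⟨his, hne⟩ := mem_filter.mp hi
    obtain ⟨b, hb⟩ := hu i his
    refine mem_zmultiples_of_abs_eq_zpow (by omega) ha hb ?_
    have hlt : |u i₀| < |u i| := (hmin i his).lt_of_ne fun h =>
      (abs_eq_abs.mp h).elim (fun h => hne h.symm) (hs.ne_neg hcard his hi₀)
    rwa [ha, hb, zpow_lt_zpow_iff_right₀ (by exact_mod_cast hp)] at hlt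
  have hsame : ∑ i ∈ s with u i = u i₀, u i = #{i ∈ s | u i = u i₀} • u i₀ := by
    rw [sum_congr rfl fun i hi => (mem_filter.mp hi).2, sum_const]
  have hsum := hs.sum_eq_zero
  rw [← sum_filter_add_sum_filter_not s (fun i => u i = u i₀), hsame,
    add_eq_zero_iff_eq_neg] at hsum
  obtain ⟨z, hz⟩ := AddSubgroup.mem_zmultiples_iff.mp (neg_mem hrest)
  rw [← hsum, zsmul_eq_mul, nsmul_eq_mul, ← mul_assoc] at hz
  have hz' : z * (p : ℤ) = #{i ∈ s | u i = u i₀} := by exact_mod_cast mul_right_cancel₀ hu₀ hz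
  exact Int.natCast_dvd_natCast.mp ⟨z, by rw [← hz', mul_comm]⟩

theorem IsMinimalZeroSum.card_modEq_two (hp : 1 < p) (hs : IsMinimalZeroSum s u)
    (hu : ∀ i ∈ s, ∃ e : ℤ, |u i| = (p : ℚ) ^ e) : #s ≡ 2 [MOD p - 1] := by
  induction hc : #s using Nat.strong_induction_on generalizing s u with
  | _ c ih =>
  subst hc
  rcases le_or_gt #s 2 with hle | hcard
  · have h1 : #s ≠ 1 := fun h1 => by
      obtain ⟨i, rfl⟩ := card_eq_one.mp h1
      obtain ⟨e, he⟩ := hu i (mem_singleton_self i)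
      have hui : u i = 0 := by simpa using hs.sum_eq_zero
      exact (zpow_pos (by positivity : (0 : ℚ) < p) e).ne' (by simp [← he, hui])
    rw [show #s = 2 by have := card_pos.mpr hs.nonempty; omega]
  obtain ⟨i₀, hi₀, hmin⟩ := exists_min_image s (fun i => |u i|) hs.nonempty
  obtain ⟨a, ha⟩ := hu i₀ hi₀
  have hp_le : p ≤ #{i ∈ s | u i = u i₀} :=
    Nat.le_of_dvd (card_pos.mpr ⟨i₀, mem_filter.mpr ⟨hi₀, rfl⟩⟩)
      (hs.dvd_card_filter_eq hp hcard hu hi₀ hmin)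
  -- merge `p` entries equal to the smallest one into a single entry `p * u i₀`
  obtain ⟨T, hT, hTcard⟩ := exists_subset_card_eq hp_le
  obtain ⟨i₁, hi₁⟩ : T.Nonempty := card_pos.mp (by omega)
  have hTs : T ⊆ s := hT.trans (filter_subset _ _)
  have hmerge := hs.merge (hTs hi₁) ((erase_subset i₁ T).trans hTs) (notMem_erase i₁ T)
  have hval : u i₁ + ∑ i ∈ T.erase i₁, u i = p * u i₀ := by
    rw [add_sum_erase T u hi₁, sum_congr rfl fun i hi => (mem_filter.mp (hT hi)).2, sum_const,
      hTcard, nsmul_eq_mul]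
  rw [hval] at hmerge
  have hcard' : #(s \ T.erase i₁) + (p - 1) = #s := by
    rw [card_sdiff_of_subset ((erase_subset i₁ T).trans hTs), card_erase_of_mem hi₁, hTcard]
    have := card_le_card hTs
    omega
  have hpow : ∀ i ∈ s \ T.erase i₁,
      ∃ e : ℤ, |Function.update u i₁ (p * u i₀) i| = (p : ℚ) ^ e := fun i hi => by
    by_cases hii : i = i₁
    · refine ⟨a + 1, ?_⟩
      rw [hii, Function.update_self, abs_mul, ha, Nat.abs_cast, zpow_add_one₀ (by positivity)]
      ring
    · rw [Function.update_of_ne hii]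
      exact hu i (mem_sdiff.mp hi).1
  rw [← hcard']
  exact Nat.add_modEq_right.trans (ih _ (by omega) hmerge hpow rfl)

end MinimalZeroSumOfPowers

section SingleDigit

variable {p : ℕ}

/-- `singleDigit p t` is the `t`-th positive integer with a single nonzero digit in base `p`:
`1, 2, …, p - 1, p, 2p, …, (p - 1) p, p², …`. -/
def singleDigit (p t : ℕ) : ℕ := (t % (p - 1) + 1) * p ^ (t / (p - 1))

theorem exists_eq_mul_add_of_pos {L : ℕ} (hL : 0 < L) (t : ℕ) : ∃ q r, r < L ∧ t = L * q + r :=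
  ⟨t / L, t % L, Nat.mod_lt t hL, (Nat.div_add_mod t L).symm⟩

theorem singleDigit_mul_add (q : ℕ) {r : ℕ} (hr : r < p - 1) :
    singleDigit p ((p - 1) * q + r) = (r + 1) * p ^ q := by
  simp [singleDigit, Nat.mul_add_div (by omega : 0 < p - 1), Nat.mod_eq_of_lt hr,
    Nat.div_eq_of_lt hr]

theorem singleDigit_succ (hp : 1 < p) (t : ℕ) :
    singleDigit p (t + 1) = singleDigit p t + p ^ (t / (p - 1)) := by
  obtain ⟨q, r, hr, rfl⟩ := exists_eq_mul_add_of_pos (by omega : 0 < p - 1) t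
  rw [singleDigit_mul_add q hr, Nat.mul_add_div (by omega), Nat.div_eq_of_lt hr, add_zero]
  rcases (show r + 1 ≤ p - 1 by omega).lt_or_eq with hr' | hr'
  · rw [add_assoc, singleDigit_mul_add q hr']
    ring
  · rw [add_assoc, hr', ← mul_add_one, ← add_zero ((p - 1) * (q + 1)),
      singleDigit_mul_add _ (by omega : 0 < p - 1)]
    obtain ⟨L, rfl⟩ := Nat.exists_eq_add_one_of_ne_zero (by omega : p ≠ 0)
    rw [Nat.add_sub_cancel]
    ring

theorem not_isSUnit_singleDigit_sub (hp : p.Prime) {a b : ℕ} (hab : a + 2 ≤ b) :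
    ¬ IsSUnit {p} ((singleDigit p b : ℚ) - singleDigit p a) := by
  -- the `p`-free part `(rb + 1) p ^ d - (ra + 1)` of the difference is prime to `p`, and it is
  -- at least 2 by Bernoulli's inequality `p ^ d ≥ 1 + d (p - 1)`
  have hL : 0 < p - 1 := by have := hp.two_le; omega
  obtain ⟨qa, ra, hra, rfl⟩ := exists_eq_mul_add_of_pos hL a
  obtain ⟨qb, rb, hrb, rfl⟩ := exists_eq_mul_add_of_pos hL b
  rw [singleDigit_mul_add qa hra, singleDigit_mul_add qb hrb]
  obtain ⟨L, rfl⟩ := Nat.exists_eq_add_one_of_ne_zero hp.ne_zero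
  simp only [Nat.add_sub_cancel] at hL hra hrb hab
  have hq : qa ≤ qb := by
    by_contra! h
    nlinarith
  obtain ⟨d, rfl⟩ := Nat.exists_eq_add_of_le hq
  have hab' : (ra : ℤ) + 2 ≤ L * d + rb := by push_cast [mul_add] at hab ⊢; linarith
  have hbern : 1 + (d : ℤ) * L ≤ ((L + 1 : ℕ) : ℤ) ^ d := by
    push_cast
    simpa [add_comm] using one_add_mul_le_pow (by linarith : (-2 : ℤ) ≤ L) d
  have hx : 2 ≤ ((rb : ℤ) + 1) * ((L + 1 : ℕ) : ℤ) ^ d - (ra + 1) := by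
    have : (1 : ℤ) ≤ ((L + 1 : ℕ) : ℤ) ^ d := one_le_pow₀ (by push_cast; linarith)
    nlinarith
  have hpx : ¬ ((L + 1 : ℕ) : ℤ) ∣ ((rb : ℤ) + 1) * ((L + 1 : ℕ) : ℤ) ^ d - (ra + 1) := by
    rcases d with _ | d
    · intro h
      have := Int.le_of_dvd (by linarith) h
      push_cast at this hab'
      linarith
    · rw [pow_succ, ← mul_assoc, dvd_sub_right (dvd_mul_left _ _)]
      intro h
      have := Int.le_of_dvd (by positivity) h
      push_cast at this
      omega
  convert not_isSUnit_pow_mul qa hpx (by omega) using 2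
  push_cast
  ring

theorem not_isSUnit_pow_add_one_sub_singleDigit (hp : p.Prime) {k t : ℕ} (ht : 0 < t)
    (htk : t < (p - 1) * k) : ¬ IsSUnit {p} ((p : ℚ) ^ k + 1 - singleDigit p t) := by
  have hL : 0 < p - 1 := by have := hp.two_le; omega
  obtain ⟨q, r, hr, rfl⟩ := exists_eq_mul_add_of_pos hL t
  rw [singleDigit_mul_add q hr]
  obtain ⟨L, rfl⟩ := Nat.exists_eq_add_one_of_ne_zero hp.ne_zero
  simp only [Nat.add_sub_cancel] at hL hr htk
  have hq : q < k := by
    by_contra! h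
    nlinarith
  obtain ⟨j, rfl⟩ := Nat.exists_eq_add_of_lt hq
  have hx : 2 ≤ ((L + 1 : ℕ) : ℤ) ^ (q + j + 1) + 1 - (r + 1) * ((L + 1 : ℕ) : ℤ) ^ q := by
    have h1 : ((L + 1 : ℕ) : ℤ) ^ (q + 1) ≤ ((L + 1 : ℕ) : ℤ) ^ (q + j + 1) :=
      pow_le_pow_right₀ (by push_cast; linarith) (by omega)
    have h2 : (1 : ℤ) ≤ ((L + 1 : ℕ) : ℤ) ^ q := one_le_pow₀ (by push_cast; linarith)
    have hr' : (r : ℤ) + 1 ≤ L := by exact_mod_cast hr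
    rw [pow_succ] at h1
    push_cast at h1 h2 ⊢
    nlinarith
  have hpx : ¬ ((L + 1 : ℕ) : ℤ) ∣
      ((L + 1 : ℕ) : ℤ) ^ (q + j + 1) + 1 - (r + 1) * ((L + 1 : ℕ) : ℤ) ^ q := by
    rw [add_sub_assoc, dvd_add_right (dvd_pow_self _ (by omega))]
    rcases q with _ | q
    · rw [pow_zero, mul_one, show (1 : ℤ) - (r + 1) = -r by ring, dvd_neg]
      intro h
      have := Int.le_of_dvd (by omega) h
      push_cast at this
      omega
    · rw [pow_succ, ← mul_assoc, dvd_sub_left (dvd_mul_left _ _)]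
      intro h
      have := Int.le_of_dvd one_pos h
      push_cast at this
      omega
  convert not_isSUnit_pow_mul 0 hpx (by omega) using 2
  push_cast
  ring

end SingleDigit

section Cycle

variable {p k : ℕ}

/-- The vertices `p ^ k + 1, 1, 2, …, p ^ k` of the cycle, indexed by `1, …, (p - 1) k + 2` and
continued by `p ^ k + 1` outside this range, so that index `(p - 1) k + 3` closes the cycle. -/
def cycleVertex (p k i : ℕ) : ℚ :=
  if 2 ≤ i ∧ i ≤ (p - 1) * k + 2 then singleDigit p (i - 2) else (p : ℚ) ^ k + 1

theorem cycleVertex_of_le {i : ℕ} (h2 : 2 ≤ i) (hi : i ≤ (p - 1) * k + 2) :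
    cycleVertex p k i = singleDigit p (i - 2) :=
  if_pos ⟨h2, hi⟩

theorem cycleVertex_of_not_le {i : ℕ} (hi : ¬ (2 ≤ i ∧ i ≤ (p - 1) * k + 2)) :
    cycleVertex p k i = (p : ℚ) ^ k + 1 :=
  if_neg hi

theorem exists_cycleVertex_succ_sub_eq_pow (hp : 1 < p) {i : ℕ} (h2 : 2 ≤ i)
    (hi : i ≤ (p - 1) * k + 2) :
    ∃ e : ℕ, cycleVertex p k (i + 1) - cycleVertex p k i = (p : ℚ) ^ e := by
  rcases hi.lt_or_eq with hi | rfl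
  · refine ⟨(i - 2) / (p - 1), ?_⟩
    rw [cycleVertex_of_le (by omega) hi, cycleVertex_of_le h2 hi.le,
      show i + 1 - 2 = i - 2 + 1 by omega, singleDigit_succ hp]
    push_cast
    ring
  · refine ⟨0, ?_⟩
    rw [cycleVertex_of_not_le (by omega), cycleVertex_of_le h2 le_rfl, Nat.add_sub_cancel,
      ← add_zero ((p - 1) * k), singleDigit_mul_add k (by omega)]
    push_cast
    ring

theorem cycleVertex_two_sub_one : cycleVertex p k 2 - cycleVertex p k 1 = -(p : ℚ) ^ k := by
  rw [cycleVertex_of_le le_rfl (by omega), cycleVertex_of_not_le (by omega)]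
  simp [singleDigit]

theorem not_isSUnit_cycleVertex_sub (hp : p.Prime) {i j : ℕ} (hi : 1 ≤ i)
    (hij : i < j) (hj : j ≤ (p - 1) * k + 2) (h1 : (i, j) ≠ (1, (p - 1) * k + 2 - 1))
    (h2 : (i, j) ≠ (2, (p - 1) * k + 2)) :
    ¬ IsSUnit {p} (cycleVertex p k (j + 1) - cycleVertex p k i) := by
  simp only [ne_eq, Prod.mk.injEq] at h1 h2
  have hn : (p - 1) * k + 2 < j + 1 ∨ j + 1 ≤ (p - 1) * k + 2 := lt_or_ge _ _
  rcases hi.lt_or_eq with hi | rfl <;> rcases hn with hn | hn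
  · rw [cycleVertex_of_not_le (by omega), cycleVertex_of_le (by omega) (by omega)]
    exact not_isSUnit_pow_add_one_sub_singleDigit hp (by omega) (by omega)
  · rw [cycleVertex_of_le (by omega) hn, cycleVertex_of_le (by omega) (by omega)]
    exact not_isSUnit_singleDigit_sub hp (by omega)
  · rw [cycleVertex_of_not_le (by omega), cycleVertex_of_not_le (by omega), sub_self]
    exact fun h => h.1 rfl
  · rw [cycleVertex_of_le (by omega) hn, cycleVertex_of_not_le (by omega), ← neg_sub]
    exact fun h => not_isSUnit_pow_add_one_sub_singleDigit hp (k := k) (t := j + 1 - 2)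
      (by omega) (by omega) (by simpa using h.neg)

theorem exists_sUnit_cycle (hp : p.Prime) :
    ∃ u : ℕ → ℚ,
      (∀ i ∈ Icc 1 ((p - 1) * k + 2), IsSUnit {p} (u i)) ∧
      IsMinimalZeroSum (Icc 1 ((p - 1) * k + 2)) u ∧
      (∀ i j : ℕ, 1 ≤ i → i < j → j ≤ (p - 1) * k + 2 →
        (i, j) ≠ (1, (p - 1) * k + 2 - 1) → (i, j) ≠ (2, (p - 1) * k + 2) →
        ¬ IsSUnit {p} (∑ l ∈ Icc i j, u l)) := by
  refine ⟨fun i => cycleVertex p k (i + 1) - cycleVertex p k i, fun i hi => ?_,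
    isMinimalZeroSum_of_pos (left_mem_Icc.mpr (by omega)) (fun i hi hi1 => ?_) ?_,
    fun i j hi hij hj h1 h2 => ?_⟩
  · rcases (mem_Icc.mp hi).1.lt_or_eq with hi1 | rfl
    · obtain ⟨e, he⟩ := exists_cycleVertex_succ_sub_eq_pow hp.one_lt hi1 (mem_Icc.mp hi).2
      simpa only [he] using isSUnit_pow hp e
    · show IsSUnit {p} (cycleVertex p k 2 - cycleVertex p k 1)
      exact cycleVertex_two_sub_one ▸ (isSUnit_pow hp k).neg
  · obtain ⟨e, he⟩ := exists_cycleVertex_succ_sub_eq_pow hp.one_lt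
      (by have := (mem_Icc.mp hi).1; omega) (mem_Icc.mp hi).2
    exact he ▸ pow_pos (by exact_mod_cast hp.pos) e
  · rw [sum_Icc_sub (by omega), cycleVertex_of_not_le (by omega),
      cycleVertex_of_not_le (by omega), sub_self]
  · rw [sum_Icc_sub hij.le]
    exact not_isSUnit_cycleVertex_sub hp hi hij hj h1 h2

end Cycle

theorem stmt_0 (p : ℕ) (hp : p.Prime) (n : ℕ) (hn : 3 ≤ n) :
    (∃ u : ℕ → ℚ,
      (∀ i ∈ Finset.Icc 1 n, IsSUnit {p} (u i)) ∧
      ∑ i ∈ Finset.Icc 1 n, u i = 0 ∧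
      (∀ t : Finset ℕ, t ⊆ Finset.Icc 1 n → t.Nonempty → t ≠ Finset.Icc 1 n →
        ∑ i ∈ t, u i ≠ 0) ∧
      (∀ i j : ℕ, 1 ≤ i → i < j → j ≤ n →
        (i, j) ≠ (1, n - 1) → (i, j) ≠ (2, n) →
        ¬ IsSUnit {p} (∑ k ∈ Finset.Icc i j, u k))) ↔
    n ≡ 2 [MOD p - 1] := by
  constructor
  · rintro ⟨u, hunit, hsum, hsub, -⟩
    have hmin : IsMinimalZeroSum (Icc 1 n) u :=
      ⟨nonempty_Icc.mpr (by omega), hsum, fun t hts ht h0 => by_contra fun h => hsub t hts ht h h0⟩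
    simpa using hmin.card_modEq_two hp.one_lt fun i hi => (hunit i hi).abs_eq_zpow hp
  · intro hmod
    obtain ⟨k, hk⟩ := (Nat.modEq_iff_dvd' (by omega)).mp hmod.symm
    obtain rfl : n = (p - 1) * k + 2 := by omega
    obtain ⟨u, hunit, hmin, hchord⟩ := exists_sUnit_cycle hp
    exact ⟨u, hunit, hmin.sum_eq_zero,
      fun t hts ht hne h0 => hne (hmin.eq_of_sum_eq_zero t hts ht h0), hchord⟩
end

section
/- Let S be a finite nonempty set of primes and m = gcd{p − 1 : p ∈ S}. Then for every sufficiently large positive integer k with k ≡ 1 (mod m) there exist positive S-units u_1, u_2, …, u_k such that u_1 + u_2 + ⋯ + u_k = 1. -/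
theorem Nat.setGcd_image_finset {α : Type*} (S : Finset α) (f : α → ℕ) :
    Nat.setGcd (f '' S) = S.gcd f :=
  Nat.dvd_antisymm (Finset.dvd_gcd fun a ha => Nat.setGcd_dvd_of_mem ⟨a, ha, rfl⟩)
    (Nat.dvd_setGcd_iff.mpr <| by
      rintro _ ⟨a, ha, rfl⟩
      exact Finset.gcd_dvd ha)

namespace Rat

variable {p : ℕ} {q r : ℚ}

theorem not_natCast_dvd_num_of_dvd_den (hp : p.Prime) (h : p ∣ q.den) :
    ¬ (p : ℤ) ∣ q.num := by
  intro hnum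
  exact hp.ne_one <| Nat.eq_one_of_dvd_coprimes q.reduced (Int.natCast_dvd.mp hnum) h

theorem natCast_dvd_num_mul (hp : p.Prime) (h : (p : ℤ) ∣ (q * r).num) :
    (p : ℤ) ∣ q.num ∨ (p : ℤ) ∣ r.num := by
  have hp' := Nat.prime_iff_prime_int.mp hp
  have hdvd : (p : ℤ) ∣ q.num * r.num * (q * r).den := by
    rw [← Rat.mul_num_den']
    exact (h.mul_right _).mul_right _
  refine hp'.dvd_mul.mp <| (hp'.dvd_mul.mp hdvd).resolve_right fun hden => ?_
  exact not_natCast_dvd_num_of_dvd_den hp (Int.natCast_dvd_natCast.mp hden) h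

theorem dvd_den_mul (hp : p.Prime) (h : p ∣ (q * r).den) : p ∣ q.den ∨ p ∣ r.den :=
  hp.dvd_mul.mp (h.trans (Rat.mul_den_dvd q r))

end Rat

namespace IsSUnit

variable {S : Finset ℕ} {q r : ℚ}

theorem one : IsSUnit S 1 :=
  ⟨one_ne_zero, fun _ hp h => h.elim
    (fun h => absurd (Int.natCast_dvd_natCast.mp h) hp.not_dvd_one) (absurd · hp.not_dvd_one)⟩

theorem mul (hq : IsSUnit S q) (hr : IsSUnit S r) : IsSUnit S (q * r) := by
  refine ⟨mul_ne_zero hq.1 hr.1, fun p hp h => ?_⟩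
  rcases h with h | h
  · rcases Rat.natCast_dvd_num_mul hp h with h | h
    exacts [hq.2 p hp (.inl h), hr.2 p hp (.inl h)]
  · rcases Rat.dvd_den_mul hp h with h | h
    exacts [hq.2 p hp (.inr h), hr.2 p hp (.inr h)]

theorem inv_natCast {p : ℕ} (hp : p.Prime) (hpS : p ∈ S) : IsSUnit S (p : ℚ)⁻¹ := by
  refine ⟨by simp [hp.ne_zero], fun q hq h => ?_⟩
  rw [Rat.inv_natCast_num_of_pos hp.pos, Rat.inv_natCast_den_of_pos hp.pos] at h
  rcases h with h | h
  · exact absurd (Int.natCast_dvd_natCast.mp h) hq.not_dvd_one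
  · rwa [(Nat.prime_dvd_prime_iff_eq hq hp).mp h]

end IsSUnit

def unitSplitLengths (S : Finset ℕ) : AddSubmonoid ℕ where
  carrier := {n | ∃ s : Multiset ℚ, Multiset.card s = n + 1 ∧
    (∀ x ∈ s, 0 < x ∧ IsSUnit S x) ∧ s.sum = 1}
  zero_mem' := ⟨{1}, rfl, by simpa using IsSUnit.one, Multiset.sum_singleton 1⟩
  add_mem' := by
    rintro a b ⟨s, hs, hsS, hs1⟩ ⟨t, ht, htS, ht1⟩
    obtain ⟨x, hx⟩ := Multiset.card_pos_iff_exists_mem.mp (by omega : 0 < Multiset.card s)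
    obtain ⟨s', rfl⟩ := Multiset.exists_cons_of_mem hx
    refine ⟨s' + t.map (x * ·), ?_, ?_, ?_⟩
    · simp only [Multiset.card_cons] at hs
      simp [ht]
      omega
    · simp only [Multiset.mem_add, Multiset.mem_map]
      rintro _ (hy | ⟨y, hy, rfl⟩)
      · exact hsS _ (Multiset.mem_cons_of_mem hy)
      · obtain ⟨hx0, hxS⟩ := hsS x hx
        obtain ⟨hy0, hyS⟩ := htS y hy
        exact ⟨mul_pos hx0 hy0, hxS.mul hyS⟩
    · rw [Multiset.sum_add, Multiset.sum_map_mul_left, Multiset.map_id', ht1, mul_one,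
        add_comm, ← Multiset.sum_cons, hs1]

theorem sub_one_mem_unitSplitLengths {S : Finset ℕ} {p : ℕ} (hp : p.Prime) (hpS : p ∈ S) :
    p - 1 ∈ unitSplitLengths S := by
  refine ⟨Multiset.replicate p (p : ℚ)⁻¹, by simp [hp.one_le], ?_, ?_⟩
  · intro x hx
    rw [Multiset.eq_of_mem_replicate hx]
    exact ⟨by simp [hp.pos], IsSUnit.inv_natCast hp hpS⟩
  · simp [hp.ne_zero]

theorem Multiset.exists_fin_sum_eq {α : Type*} [AddCommMonoid α] {s : Multiset α} {k : ℕ}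
    (hs : Multiset.card s = k) :
    ∃ u : Fin k → α, (∀ i, u i ∈ s) ∧ ∑ i, u i = s.sum := by
  obtain ⟨l, rfl⟩ : ∃ l : List α, (l : Multiset α) = s := Quotient.exists_rep s
  rw [Multiset.coe_card] at hs
  subst hs
  refine ⟨l.get, l.get_mem, ?_⟩
  rw [Multiset.sum_coe, ← List.sum_ofFn, List.ofFn_get]

theorem stmt_4_general (S : Finset ℕ) (hP : ∀ p ∈ S, p.Prime) :
    ∃ k₀ : ℕ, ∀ k : ℕ, k₀ ≤ k → 0 < k → k ≡ 1 [MOD S.gcd (fun p => p - 1)] →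
      ∃ u : Fin k → ℚ,
        (∀ i, 0 < u i ∧ IsSUnit S (u i)) ∧ ∑ i, u i = 1 := by
  have hclosure : AddSubmonoid.closure ((· - 1) '' S) ≤ unitSplitLengths S :=
    AddSubmonoid.closure_le.mpr <| by
      rintro _ ⟨p, hpS, rfl⟩
      exact sub_one_mem_unitSplitLengths (hP p hpS) hpS
  obtain ⟨n₀, hn₀⟩ := Nat.exists_mem_closure_of_ge ((· - 1) '' (S : Set ℕ))
  rw [Nat.setGcd_image_finset] at hn₀
  refine ⟨n₀ + 1, fun k hk hk0 hmod => ?_⟩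
  obtain ⟨s, hcard, hsS, hs1⟩ := hclosure <| hn₀ (k - 1) (by omega)
    ((Nat.modEq_iff_dvd' hk0).mp hmod.symm)
  obtain ⟨u, hus, hu⟩ := Multiset.exists_fin_sum_eq (hcard.trans (Nat.sub_add_cancel hk0))
  exact ⟨u, fun i => hsS _ (hus i), hu.trans hs1⟩

theorem stmt_4 (S : Finset ℕ) (hS : S.Nonempty) (hP : ∀ p ∈ S, p.Prime) :
    ∃ k₀ : ℕ, ∀ k : ℕ, k₀ ≤ k → 0 < k → k ≡ 1 [MOD S.gcd (fun p => p - 1)] →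
      ∃ u : Fin k → ℚ,
        (∀ i, 0 < u i ∧ IsSUnit S (u i)) ∧ ∑ i, u i = 1 :=
  stmt_4_general S hP
end

section
/- Let S be a finite nonempty set of primes and m = gcd{p − 1 : p ∈ S}. If u_1, u_2, …, u_k are positive S-units with u_1 + u_2 + ⋯ + u_k = 1, then k ≡ 1 (mod m). -/
/-!
Every prime `p ∈ S` is `≡ 1 (mod m)`, hence so is the numerator and the denominator of every
positive `S`-unit. Clearing denominators in `u₁ + ⋯ + uₖ = 1` with `D = ∏ den uⱼ` gives the
integer identity `∑ᵢ num uᵢ · ∏_{j ≠ i} den uⱼ = D`, which reads `k ≡ 1 (mod m)`.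
-/

open Finset

lemma Nat.cast_eq_one_of_forall_prime_dvd {R : Type*} [Semiring R] {n : ℕ} (hn : n ≠ 0)
    (h : ∀ p : ℕ, p.Prime → p ∣ n → (p : R) = 1) : (n : R) = 1 := by
  induction n using induction_on_primes with
  | zero => exact absurd rfl hn
  | one => exact Nat.cast_one
  | prime_mul p a hp ih =>
    rw [Nat.cast_mul, h p hp (dvd_mul_right p a), one_mul]
    exact ih (right_ne_zero_of_mul hn) fun q hq hqa => h q hq (dvd_mul_of_dvd_right hqa p)

namespace IsSUnit

variable {S : Finset ℕ} {R : Type*} {u : ℚ}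

lemma den_cast_eq_one [Semiring R] (hS : ∀ p ∈ S, (p : R) = 1) (hu : IsSUnit S u) :
    (u.den : R) = 1 :=
  Nat.cast_eq_one_of_forall_prime_dvd u.den_nz fun p hp hpd => hS p (hu.2 p hp (Or.inr hpd))

lemma num_cast_eq_one [Ring R] (hS : ∀ p ∈ S, (p : R) = 1) (hu : IsSUnit S u) (hpos : 0 < u) :
    (u.num : R) = 1 := by
  have hnum : (u.num.natAbs : ℤ) = u.num := Int.natAbs_of_nonneg (Rat.num_pos.mpr hpos).le
  rw [← hnum, Int.cast_natCast]
  exact Nat.cast_eq_one_of_forall_prime_dvd (Int.natAbs_ne_zero.mpr (Rat.num_ne_zero.mpr hu.1))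
    fun p hp hpd => hS p (hu.2 p hp (Or.inl (Int.natCast_dvd.mpr hpd)))

end IsSUnit

lemma Rat.sum_num_mul_prod_erase_den {ι : Type*} [DecidableEq ι] (s : Finset ι) (u : ι → ℚ) :
    ((∑ i ∈ s, (u i).num * ∏ j ∈ s.erase i, ((u j).den : ℤ) : ℤ) : ℚ) =
      (∑ i ∈ s, u i) * ∏ j ∈ s, ((u j).den : ℚ) := by
  push_cast
  rw [sum_mul]
  refine sum_congr rfl fun i hi => ?_
  rw [← mul_prod_erase s (fun j => ((u j).den : ℚ)) hi, ← mul_assoc, Rat.mul_den_eq_num]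

lemma ZMod.natCast_eq_one_of_dvd_sub_one {m p : ℕ} (hp : 1 ≤ p) (h : m ∣ p - 1) :
    (p : ZMod m) = 1 := by
  rw [← Nat.cast_one, ZMod.natCast_eq_natCast_iff]
  exact ((Nat.modEq_iff_dvd' hp).mpr h).symm

theorem stmt_8_general (S : Finset ℕ) (hP : ∀ p ∈ S, p.Prime)
    (k : ℕ) (u : Fin k → ℚ)
    (hu : ∀ i, 0 < u i ∧ IsSUnit S (u i)) (hsum : ∑ i, u i = 1) :
    k ≡ 1 [MOD S.gcd (fun p => p - 1)] := by
  set m := S.gcd (fun p => p - 1)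
  have hS : ∀ p ∈ S, (p : ZMod m) = 1 := fun p hp =>
    ZMod.natCast_eq_one_of_dvd_sub_one (hP p hp).one_le (gcd_dvd hp)
  have hcleared : ∑ i, (u i).num * ∏ j ∈ univ.erase i, ((u j).den : ℤ) = ∏ j, ((u j).den : ℤ) := by
    apply Int.cast_injective (α := ℚ)
    rw [Rat.sum_num_mul_prod_erase_den, hsum, one_mul]
    push_cast
    rfl
  have hmod := congrArg (Int.cast : ℤ → ZMod m) hcleared
  simp only [Int.cast_sum, Int.cast_mul, Int.cast_prod, Int.cast_natCast,
    fun i => (hu i).2.den_cast_eq_one hS, fun i => (hu i).2.num_cast_eq_one hS (hu i).1,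
    prod_const_one, mul_one, sum_const, card_univ, Fintype.card_fin, nsmul_eq_mul] at hmod
  exact (ZMod.natCast_eq_natCast_iff k 1 m).mp (by rw [hmod, Nat.cast_one])

theorem stmt_8 (S : Finset ℕ) (hS : S.Nonempty) (hP : ∀ p ∈ S, p.Prime)
    (k : ℕ) (hk : 0 < k) (u : Fin k → ℚ)
    (hu : ∀ i, 0 < u i ∧ IsSUnit S (u i)) (hsum : ∑ i, u i = 1) :
    k ≡ 1 [MOD S.gcd (fun p => p - 1)] :=
  stmt_8_general S hP k u hu hsum
end

section
/- Let p be a prime number and S = {p}. If u_1, u_2, …, u_n are S-units with u_1 + u_2 + ⋯ + u_n = 0 and no nonempty proper subfamily of the u_i sums to 0 (i.e. u_{i_1} + ⋯ + u_{i_l} ≠ 0 for all 0 < l < n and 1 ≤ i_1 < ⋯ < i_l ≤ n), then n ≡ 2 (mod p − 1). -/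
/-!
Clear denominators so that the `u i` become integers `±p ^ kᵢ`, and regard them as a multiset
with zero sum and no nonempty proper zero-sum submultiset. Let `a` be an element of least absolute
value. Its negative cannot occur (unless the multiset is `{a, -a}`, of size `2`), and every other
element is divisible by `p * a`, so reducing the sum modulo `p * a` shows that `a` occurs a multiple
of `p` times. Replacing `p` copies of `a` by the single element `p * a` yields a smaller multiset of
the same kind, with `p - 1` fewer elements; induction on the size concludes.
-/

namespace Multiset

variable {α β M : Type*}

theorem exists_le_and_eq_map_of_le_map [DecidableEq β] {f : α → β} {s : Multiset α}
    {t : Multiset β} (h : t ≤ s.map f) : ∃ t' ≤ s, t = t'.map f := by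
  induction s using Multiset.induction generalizing t with
  | empty => exact ⟨0, le_rfl, by simpa using h⟩
  | cons a s ih =>
    rw [map_cons, ← erase_le_iff_le_cons] at h
    obtain ⟨t', ht', he⟩ := ih h
    by_cases ha : f a ∈ t
    · exact ⟨a ::ₘ t', cons_le_cons a ht', by rw [map_cons, ← he, cons_erase ha]⟩
    · exact ⟨t', ht'.trans (le_cons_self s a), by rw [← he, erase_of_notMem ha]⟩

structure IsMinimalZeroSum [AddCommMonoid M] (s : Multiset M) : Prop where
  ne_zero : s ≠ 0
  sum_eq_zero : s.sum = 0
  eq_zero_or_eq_of_le : ∀ t ≤ s, t.sum = 0 → t = 0 ∨ t = s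

namespace IsMinimalZeroSum

theorem nsmul_cons [AddCommMonoid M] {n : ℕ} {a : M} {r : Multiset M}
    (h : (replicate n a + r).IsMinimalZeroSum) (hn : n ≠ 0) :
    ((n • a) ::ₘ r).IsMinimalZeroSum where
  ne_zero := cons_ne_zero
  sum_eq_zero := by simpa [sum_replicate] using h.sum_eq_zero
  eq_zero_or_eq_of_le t ht hsum := by
    classical
    by_cases ha : n • a ∈ t
    · have hle : replicate n a + t.erase (n • a) ≤ replicate n a + r :=
        add_le_add_right (erase_le_iff_le_cons.2 ht) _
      have hsum' : (replicate n a + t.erase (n • a)).sum = 0 := by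
        rw [← hsum, ← cons_erase ha, sum_add, sum_replicate, sum_cons, erase_cons_head]
      rcases h.eq_zero_or_eq_of_le _ hle hsum' with h0 | heq
      · rw [add_eq_zero, ← card_eq_zero, card_replicate] at h0
        exact absurd h0.1 hn
      · right
        rw [← cons_erase ha, add_left_cancel heq]
    · have htr : t ≤ r := (le_cons_of_notMem ha).1 ht
      refine (h.eq_zero_or_eq_of_le t (htr.trans (le_add_left _ _)) hsum).imp_right
        fun hts => absurd (card_le_card htr) ?_
      rw [hts, card_add, card_replicate]
      omega

theorem eq_pair_of_neg_mem [AddCommGroup M] {s : Multiset M} (h : s.IsMinimalZeroSum) {a : M}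
    (ha : a ∈ s) (hna : -a ∈ s) (hne : a ≠ -a) : s = {a, -a} := by
  classical
  have hle : ({a, -a} : Multiset M) ≤ s :=
    (le_iff_subset (by simp [hne])).2 fun x hx => by
      rcases mem_cons.1 hx with rfl | hx
      exacts [ha, (mem_singleton.1 hx) ▸ hna]
  rcases h.eq_zero_or_eq_of_le _ hle (by simp) with h0 | heq
  · simp at h0
  · exact heq.symm

end IsMinimalZeroSum

theorem isMinimalZeroSum_map_univ {ι : Type*} [Fintype ι] [Nonempty ι] [AddCommMonoid M]
    {f : ι → M} (hsum : ∑ i, f i = 0)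
    (hf : ∀ t : Finset ι, t.Nonempty → t ≠ Finset.univ → ∑ i ∈ t, f i ≠ 0) :
    (Finset.univ.val.map f).IsMinimalZeroSum where
  ne_zero := by simp [Finset.univ_eq_empty_iff]
  sum_eq_zero := hsum
  eq_zero_or_eq_of_le t ht htsum := by
    classical
    obtain ⟨t', ht', rfl⟩ := exists_le_and_eq_map_of_le_map ht
    let T : Finset ι := ⟨t', nodup_of_le ht' Finset.univ.nodup⟩
    by_contra! hT
    refine hf T ?_ ?_ htsum
    · exact Finset.nonempty_iff_ne_empty.2 fun h0 =>
        hT.1 (by simp [← Finset.val_eq_zero.2 h0, T])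
    · exact fun h0 => hT.2 (by rw [← Finset.val_inj.2 h0])

end Multiset

namespace Int

theorem dvd_count_of_sum_eq_zero {s : Multiset ℤ} {a b : ℤ} (ha : a ≠ 0) (hs : s.sum = 0)
    (h : ∀ x ∈ s, x = a ∨ b * a ∣ x) : b ∣ s.count a := by
  have hrest : b * a ∣ (s.filter fun x => ¬x = a).sum :=
    Multiset.dvd_sum fun x hx =>
      (h x (Multiset.mem_of_mem_filter hx)).resolve_left (Multiset.mem_filter.1 hx).2
  have hcount : s.count a * a = -(s.filter fun x => ¬x = a).sum := by
    rw [← Multiset.filter_add_not (· = a) s, Multiset.filter_eq', Multiset.sum_add,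
      Multiset.sum_replicate, nsmul_eq_mul] at hs
    linarith
  exact (mul_dvd_mul_iff_right ha).1 (hcount ▸ dvd_neg.2 hrest)

theorem eq_or_eq_neg_or_dvd_of_natAbs_eq_pow {p m k : ℕ} (hp : 1 < p) {a x : ℤ}
    (ha : a.natAbs = p ^ m) (hx : x.natAbs = p ^ k) (hle : a.natAbs ≤ x.natAbs) :
    x = a ∨ x = -a ∨ p * a ∣ x := by
  rw [ha, hx, Nat.pow_le_pow_iff_right hp] at hle
  rcases hle.eq_or_lt with rfl | hlt
  · exact (natAbs_eq_natAbs_iff.1 (hx.trans ha.symm)).elim Or.inl (Or.inr ∘ Or.inl)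
  · refine Or.inr (Or.inr (natAbs_dvd_natAbs.1 ?_))
    rw [natAbs_mul, natAbs_natCast, ha, hx, ← pow_succ']
    exact pow_dvd_pow p hlt

end Int

theorem Multiset.IsMinimalZeroSum.card_modEq_two {p : ℕ} (hp : p.Prime) {s : Multiset ℤ}
    (hs : s.IsMinimalZeroSum) (hpow : ∀ x ∈ s, ∃ k, x.natAbs = p ^ k) :
    card s ≡ 2 [MOD p - 1] := by
  induction hN : card s using Nat.strong_induction_on generalizing s with
  | _ N ih =>
  by_cases h2 : N = 2
  · rw [h2]
  classical
  obtain ⟨a, ha, hmin⟩ := s.toFinset.exists_min_image Int.natAbs (by simpa using hs.ne_zero)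
  rw [mem_toFinset] at ha
  obtain ⟨m, hm⟩ := hpow a ha
  have ha0 : a ≠ 0 := by
    rintro rfl
    exact pow_ne_zero m hp.ne_zero hm.symm
  have hna : -a ∉ s := fun hna => h2 <| by
    rw [← hN, hs.eq_pair_of_neg_mem ha hna (by omega)]
    rfl
  have hdiv : ∀ x ∈ s, x = a ∨ p * a ∣ x := fun x hx => by
    obtain ⟨k, hk⟩ := hpow x hx
    rcases Int.eq_or_eq_neg_or_dvd_of_natAbs_eq_pow hp.one_lt hm hk
      (hmin x (mem_toFinset.2 hx)) with rfl | rfl | hdvd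
    exacts [Or.inl rfl, absurd hx hna, Or.inr hdvd]
  have hcount : p ∣ s.count a :=
    Int.natCast_dvd_natCast.1 (Int.dvd_count_of_sum_eq_zero ha0 hs.sum_eq_zero hdiv)
  obtain ⟨r, rfl⟩ := exists_add_of_le <|
    le_count_iff_replicate_le.1 (Nat.le_of_dvd (count_pos.2 ha) hcount)
  have hmerged := hs.nsmul_cons hp.ne_zero
  have hmerged_pow : ∀ x ∈ (p • a) ::ₘ r, ∃ k, x.natAbs = p ^ k := by
    simp only [mem_cons, forall_eq_or_imp]
    refine ⟨⟨m + 1, ?_⟩, fun x hx => hpow x (mem_add.2 (Or.inr hx))⟩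
    rw [nsmul_eq_mul, Int.natAbs_mul, Int.natAbs_natCast, hm, pow_succ']
  have hcard : N = card ((p • a) ::ₘ r) + (p - 1) := by
    rw [← hN, card_add, card_replicate, card_cons]
    have := hp.one_lt
    omega
  rw [hcard]
  exact Nat.add_modEq_right.trans
    (ih _ (by have := hp.two_le; omega) hmerged hmerged_pow rfl)

theorem IsSUnit.natAbs_num_eq_pow {p : ℕ} {u : ℚ} (h : IsSUnit {p} u) :
    ∃ k, u.num.natAbs = p ^ k :=
  ⟨_, Nat.eq_prime_pow_of_unique_prime_dvd (Int.natAbs_ne_zero.2 (Rat.num_ne_zero.2 h.1))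
    fun hq hdvd => Finset.mem_singleton.1 (h.2 _ hq (Or.inl (Int.ofNat_dvd_left.2 hdvd)))⟩

theorem IsSUnit.den_eq_pow {p : ℕ} {u : ℚ} (h : IsSUnit {p} u) : ∃ k, u.den = p ^ k :=
  ⟨_, Nat.eq_prime_pow_of_unique_prime_dvd u.den_nz
    fun hq hdvd => Finset.mem_singleton.1 (h.2 _ hq (Or.inr hdvd))⟩

theorem IsSUnit.exists_int_mul_eq {ι : Type*} [Fintype ι] {p : ℕ} (hp : p ≠ 0)
    {u : ι → ℚ} (hu : ∀ i, IsSUnit {p} (u i)) :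
    ∃ (c : ℚ) (v : ι → ℤ), c ≠ 0 ∧ (∀ i, (v i : ℚ) = c * u i) ∧
      ∀ i, ∃ k, (v i).natAbs = p ^ k := by
  choose e he using fun i => (hu i).natAbs_num_eq_pow
  choose d hd using fun i => (hu i).den_eq_pow
  set K := Finset.univ.sup d
  have hdK : ∀ i, d i ≤ K := fun i => Finset.le_sup (Finset.mem_univ i)
  have hp0 : (p : ℚ) ≠ 0 := Nat.cast_ne_zero.2 hp
  refine ⟨p ^ K, fun i => (u i).num * p ^ (K - d i), pow_ne_zero K hp0, fun i => ?_,
    fun i => ⟨e i + (K - d i), by simp [Int.natAbs_mul, he, pow_add]⟩⟩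
  rw [← pow_sub_mul_pow (p : ℚ) (hdK i), ← Rat.num_div_den (u i), hd i]
  push_cast
  field_simp

theorem stmt_9 (p : ℕ) (hp : p.Prime) (n : ℕ) (hn : 1 ≤ n) (u : Fin n → ℚ)
    (hu : ∀ i, IsSUnit {p} (u i)) (hsum : ∑ i, u i = 0)
    (hnd : ∀ t : Finset (Fin n), t.Nonempty → t ≠ Finset.univ →
      ∑ i ∈ t, u i ≠ 0) :
    n ≡ 2 [MOD p - 1] := by
  obtain ⟨c, v, hc, hv, hvpow⟩ := IsSUnit.exists_int_mul_eq hp.ne_zero hu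
  have hvsum (t : Finset (Fin n)) : ((∑ i ∈ t, v i : ℤ) : ℚ) = c * ∑ i ∈ t, u i := by
    simp [hv, Finset.mul_sum]
  have : Nonempty (Fin n) := ⟨⟨0, hn⟩⟩
  have hmin : (Finset.univ.val.map v).IsMinimalZeroSum :=
    Multiset.isMinimalZeroSum_map_univ
      (Int.cast_eq_zero.1 ((hvsum .univ).trans (by rw [hsum, mul_zero])))
      fun t ht htu h0 => hnd t ht htu (by simpa [hc, h0] using (hvsum t).symm)
  simpa using hmin.card_modEq_two hp (by simpa using hvpow)
end

section
/- Let p be a prime number and S = {p}. For every integer k > 1 with k ≡ 1 (mod p − 1) there exist positive S-units u_1, u_2, …, u_k such that u_1 + u_2 + ⋯ + u_k = 1 and u_i + u_{i+1} + ⋯ + u_j is not an S-unit for all 1 ≤ i < j ≤ k with (i, j) ≠ (1, k). In fact, writing d = (k − 1)/(p − 1), one may take u_1 = 1/p^d followed by p − 1 copies of 1/p^e for each e = 1, 2, …, d. -/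
/-- The explicit sequence: `u 1 = 1/p^d` with `d = (k-1)/(p-1)`, followed (for
`i = 2, …, k`) by `p - 1` copies of `1/p^e` for each `e = 1, 2, …, d`. -/
noncomputable def ruzsaSeq (p k : ℕ) : ℕ → ℚ := fun i =>
  if i = 1 then ((p : ℚ)) ^ (-(((k - 1) / (p - 1) : ℕ) : ℤ))
  else ((p : ℚ)) ^ (-(((i - 2) / (p - 1) + 1 : ℕ) : ℤ))

/-!
After `u 1 = p⁻ᵈ` the terms come in blocks of `p - 1` copies of `p⁻ᵉ`, so the first
`(p - 1) s + r` of them (`r ≤ p - 1`) sum to `1 - (p - r) / p ^ (s + 1)`. Consequently every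
sum `u i + ⋯ + u j` with `(i, j) ≠ (1, k)` can be written `N / p ^ E` with `p ∤ N`: choosing
`1 ≤ r ≤ p - 1` keeps the residue of `N` mod `p` nonzero. Moreover `N ≥ 2`, since the sum has
at least two terms, each at least `p⁻ᴱ`. But `N / p ^ E` with `p ∤ N` is a `{p}`-unit only if
`N = ±1`.
-/

open Finset

lemma isSUnit_inv_pow {S : Finset ℕ} {p : ℕ} (hp : p.Prime) (hpS : p ∈ S) (e : ℕ) :
    IsSUnit S ((p : ℚ) ^ e)⁻¹ := by
  have hpe : p ^ e ≠ 0 := pow_ne_zero e hp.ne_zero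
  refine ⟨inv_ne_zero (pow_ne_zero _ (Nat.cast_ne_zero.mpr hp.ne_zero)), fun Q hQ hdvd => ?_⟩
  rw [← Nat.cast_pow, Rat.inv_natCast_num, Rat.inv_natCast_den, if_neg hpe] at hdvd
  rcases hdvd with hnum | hden
  · rw [Int.sign_natCast_of_ne_zero hpe, Int.natCast_dvd_ofNat] at hnum
    exact absurd (Nat.eq_one_of_dvd_one hnum) hQ.ne_one
  · rwa [(Nat.prime_dvd_prime_iff_eq hQ hp).mp (hQ.dvd_of_dvd_pow hden)]

lemma not_isSUnit_singleton_of_eq_div_pow {p : ℕ} (hp : p.Prime) {x : ℚ} {N : ℤ} {E : ℕ}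
    (hx : x = N / (p : ℚ) ^ E) (hN : N.natAbs ≠ 1) (hpN : ¬ (p : ℤ) ∣ N) :
    ¬ IsSUnit {p} x := by
  rintro ⟨-, hS⟩
  have hpN' : ¬ p ∣ N.natAbs := fun h => hpN (Int.natCast_dvd.mpr h)
  have hcop : N.natAbs.Coprime ((p : ℤ) ^ E).natAbs := by
    rw [Int.natAbs_pow, Int.natAbs_natCast]
    exact (hp.coprime_iff_not_dvd.mpr hpN').symm.pow_right E
  have hnum : x.num = N := by
    rw [hx]; exact_mod_cast Rat.num_div_eq_of_coprime (pow_pos (Int.natCast_pos.mpr hp.pos) E) hcop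
  have hQ := Nat.minFac_prime hN
  have hQN : (N.natAbs.minFac : ℤ) ∣ x.num := hnum ▸ Int.natCast_dvd.mpr (Nat.minFac_dvd _)
  have hQp : N.natAbs.minFac = p := Finset.mem_singleton.mp (hS _ hQ (Or.inl hQN))
  exact hpN (hQp ▸ hnum ▸ hQN)

lemma Int.not_dvd_of_modEq_of_abs_lt {p N r : ℤ} (h : N ≡ r [ZMOD p]) (hr : r ≠ 0)
    (hrp : |r| < p) : ¬ p ∣ N := fun hN =>
  hr (Int.eq_zero_of_abs_lt_dvd (Int.modEq_zero_iff_dvd.mp (h.symm.trans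
    (Int.modEq_zero_iff_dvd.mpr hN))) hrp)

lemma Nat.exists_eq_mul_add_of_pos {q b : ℕ} (hq : 0 < q) (hb : 0 < b) :
    ∃ s r, b = q * s + r ∧ 1 ≤ r ∧ r ≤ q :=
  ⟨(b - 1) / q, (b - 1) % q + 1, by have := Nat.div_add_mod (b - 1) q; omega, by omega,
    Nat.mod_lt _ hq⟩

section ruzsaSeq

variable {p k : ℕ}

lemma ruzsaSeq_one (hp : 1 < p) {d : ℕ} (hk : k = (p - 1) * d + 1) :
    ruzsaSeq p k 1 = ((p : ℚ) ^ d)⁻¹ := by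
  simp only [ruzsaSeq, if_pos, zpow_neg, zpow_natCast, hk, Nat.add_sub_cancel,
    Nat.mul_div_cancel_left _ (Nat.sub_pos_of_lt hp)]

lemma ruzsaSeq_add_two (n : ℕ) : ruzsaSeq p k (n + 2) = ((p : ℚ) ^ (n / (p - 1) + 1))⁻¹ := by
  simp only [ruzsaSeq, if_neg (by omega : n + 2 ≠ 1), Nat.add_sub_cancel, zpow_neg, zpow_natCast]

lemma exists_ruzsaSeq_eq_inv_pow (i : ℕ) :
    ∃ e : ℕ, ruzsaSeq p k i = ((p : ℚ) ^ e)⁻¹ := by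
  unfold ruzsaSeq
  split_ifs
  exacts [⟨_, by rw [zpow_neg, zpow_natCast]⟩, ⟨_, by rw [zpow_neg, zpow_natCast]⟩]

lemma sum_range_ruzsaSeq_add_two (hp : 1 < p) (s : ℕ) {r : ℕ} (hr : r ≤ p - 1) :
    ∑ n ∈ range ((p - 1) * s + r), ruzsaSeq p k (n + 2) =
      1 - ((p : ℚ) - r) / p ^ (s + 1) := by
  have hp0 : (p : ℚ) ≠ 0 := by positivity
  have hblock : ∀ t m, m ≤ p - 1 →
      ∑ n ∈ range m, ruzsaSeq p k ((p - 1) * t + n + 2) = m / (p : ℚ) ^ (t + 1) := by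
    intro t m hm
    have hdiv : ∀ n ∈ range m, ((p - 1) * t + n) / (p - 1) = t := fun n hn => by
      rw [Nat.mul_add_div (by omega), Nat.div_eq_of_lt (by have := mem_range.mp hn; omega),
        add_zero]
    rw [sum_congr rfl fun n hn => by rw [ruzsaSeq_add_two, hdiv n hn]]
    simp [div_eq_mul_inv]
  have hfull : ∀ s,
      ∑ n ∈ range ((p - 1) * s), ruzsaSeq p k (n + 2) = 1 - 1 / (p : ℚ) ^ s := by
    intro s
    induction s with
    | zero => simp
    | succ s ih =>
      rw [mul_add_one, sum_range_add, ih, hblock s _ le_rfl, Nat.cast_sub hp.le]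
      field_simp
      ring
  rw [sum_range_add, hfull, hblock s r hr]
  field_simp
  ring

lemma sum_Icc_ruzsaSeq_eq_sub {i j : ℕ} (hi : 2 ≤ i) (hij : i ≤ j + 1) :
    ∑ l ∈ Icc i j, ruzsaSeq p k l =
      ∑ n ∈ range (j - 1), ruzsaSeq p k (n + 2) -
        ∑ n ∈ range (i - 2), ruzsaSeq p k (n + 2) := by
  rw [← sum_Ico_eq_sub _ (by omega), sum_Ico_add', ← Ico_add_one_right_eq_Icc,
    Nat.sub_add_cancel hi, show j - 1 + 2 = j + 1 by omega]

lemma sum_Icc_one_ruzsaSeq_eq_add {j : ℕ} (hj : 1 ≤ j) :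
    ∑ l ∈ Icc 1 j, ruzsaSeq p k l =
      ruzsaSeq p k 1 + ∑ n ∈ range (j - 1), ruzsaSeq p k (n + 2) := by
  rw [← add_sum_Ioc_eq_sum_Icc hj, ← Icc_add_one_left_eq_Ioc, one_add_one_eq_two,
    sum_Icc_ruzsaSeq_eq_sub le_rfl (by omega), range_zero, sum_empty, sub_zero]

lemma le_sum_Icc_ruzsaSeq (hp : 1 < p) {i j e : ℕ} (hi : 2 ≤ i) (hj : j ≤ (p - 1) * e + 1) :
    ((j + 1 - i : ℕ) : ℚ) / p ^ e ≤ ∑ l ∈ Icc i j, ruzsaSeq p k l := by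
  have hterm : ∀ l ∈ Icc i j, ((p : ℚ) ^ e)⁻¹ ≤ ruzsaSeq p k l := by
    intro l hl
    obtain ⟨hil, hlj⟩ := mem_Icc.mp hl
    obtain ⟨n, rfl⟩ : ∃ n, l = n + 2 := ⟨l - 2, by omega⟩
    have hn : n / (p - 1) < e := (Nat.div_lt_iff_lt_mul (by omega)).mpr (by lia)
    rw [ruzsaSeq_add_two]
    exact inv_anti₀ (by positivity) (pow_le_pow_right₀ (by exact_mod_cast hp.le) hn)
  simpa [div_eq_mul_inv] using card_nsmul_le_sum _ _ _ hterm

lemma not_isSUnit_sum_Icc_ruzsaSeq (hp : p.Prime) {i j : ℕ} (hi : 2 ≤ i) (hij : i < j) :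
    ¬ IsSUnit {p} (∑ l ∈ Icc i j, ruzsaSeq p k l) := by
  have hp1 := hp.one_lt
  obtain ⟨s, r, hb, hr1, hrq⟩ :=
    Nat.exists_eq_mul_add_of_pos (q := p - 1) (by omega) (by omega : 0 < j - 1)
  obtain ⟨s', r', ha, hr'q⟩ : ∃ s' r', i - 2 = (p - 1) * s' + r' ∧ r' < p - 1 :=
    ⟨_, _, (Nat.div_add_mod _ _).symm, Nat.mod_lt _ (by omega)⟩
  obtain ⟨t, rfl⟩ : ∃ t, s = s' + t := Nat.exists_eq_add_of_le <| Nat.lt_succ_iff.mp <|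
    Nat.lt_of_mul_lt_mul_left (a := p - 1) (show _ < (p - 1) * (s + 1) by rw [mul_add_one]; omega)
  set N : ℤ := (p - r') * p ^ t - (p - r)
  have hx : ∑ l ∈ Icc i j, ruzsaSeq p k l = N / (p : ℚ) ^ (s' + t + 1) := by
    rw [sum_Icc_ruzsaSeq_eq_sub hi (by omega), hb, ha, sum_range_ruzsaSeq_add_two hp1 _ hrq,
      sum_range_ruzsaSeq_add_two hp1 _ hr'q.le]
    push_cast [N]
    field_simp
    ring
  have hN : 2 ≤ N := by
    have hlow := le_sum_Icc_ruzsaSeq (k := k) hp1 hi (j := j) (e := s' + t + 1)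
      (by rw [mul_add_one]; omega)
    rw [hx, div_le_div_iff_of_pos_right (by positivity)] at hlow
    have h2 : (2 : ℚ) ≤ N := le_trans (by norm_cast; omega) hlow
    exact_mod_cast h2
  refine not_isSUnit_singleton_of_eq_div_pow hp hx (by omega) ?_
  cases t with
  | zero =>
    have hN_eq : N = r - r' := by simp only [N]; ring
    exact Int.not_dvd_of_modEq_of_abs_lt (Int.ModEq.refl N) (by omega)
      (abs_lt.mpr ⟨by omega, by omega⟩)
  | succ t =>
    refine Int.not_dvd_of_modEq_of_abs_lt (r := r - p) ?_ (by omega)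
      (abs_lt.mpr ⟨by omega, by omega⟩)
    exact Int.modEq_iff_dvd.mpr ⟨-(p - r') * p ^ t, by simp only [N]; ring⟩

lemma not_isSUnit_sum_Icc_one_ruzsaSeq (hp : p.Prime) {d j : ℕ} (hk : k = (p - 1) * d + 1)
    (hj : 1 < j) (hjk : j < k) : ¬ IsSUnit {p} (∑ l ∈ Icc 1 j, ruzsaSeq p k l) := by
  have hp1 := hp.one_lt
  obtain ⟨s, r, hb, hr1, hrq⟩ :=
    Nat.exists_eq_mul_add_of_pos (q := p - 1) (by omega) (by omega : 0 < j - 1)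
  obtain ⟨t, rfl⟩ : ∃ t, d = s + 1 + t := Nat.exists_eq_add_of_le <| Nat.succ_le_of_lt <|
    Nat.lt_of_mul_lt_mul_left (a := p - 1) (by omega)
  set N : ℤ := p ^ (s + 1 + t) + 1 - (p - r) * p ^ t
  have hx : ∑ l ∈ Icc 1 j, ruzsaSeq p k l = N / (p : ℚ) ^ (s + 1 + t) := by
    rw [sum_Icc_one_ruzsaSeq_eq_add hj.le, ruzsaSeq_one hp1 hk, hb,
      sum_range_ruzsaSeq_add_two hp1 _ hrq]
    push_cast [N]
    field_simp
    ring
  have hN : 2 ≤ N := by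
    have hlow : 2 / (p : ℚ) ^ (s + 1 + t) ≤ ∑ l ∈ Icc 1 j, ruzsaSeq p k l := by
      rw [← add_sum_Ioc_eq_sum_Icc hj.le, ← Icc_add_one_left_eq_Ioc, ruzsaSeq_one hp1 hk]
      have htail := le_sum_Icc_ruzsaSeq (k := k) hp1 (i := 1 + 1) (j := j) (e := s + 1 + t)
        le_rfl (by rw [hk] at hjk; omega)
      calc 2 / (p : ℚ) ^ (s + 1 + t)
          = ((p : ℚ) ^ (s + 1 + t))⁻¹ + 1 / (p : ℚ) ^ (s + 1 + t) := by ring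
        _ ≤ _ := add_le_add_right (le_trans (div_le_div_of_nonneg_right
          (by exact_mod_cast (by omega : 1 ≤ j + 1 - (1 + 1))) (by positivity)) htail) _
    rw [hx, div_le_div_iff_of_pos_right (by positivity)] at hlow
    exact_mod_cast hlow
  refine not_isSUnit_singleton_of_eq_div_pow hp hx (by omega) ?_
  cases t with
  | zero =>
    have hr : r < p - 1 := by rw [hk, add_zero, mul_add_one] at hjk; omega
    refine Int.not_dvd_of_modEq_of_abs_lt (r := r + 1 - p) ?_ (by omega)
      (abs_lt.mpr ⟨by omega, by omega⟩)
    exact Int.modEq_iff_dvd.mpr ⟨- p ^ s, by simp only [N]; ring⟩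
  | succ t =>
    refine Int.not_dvd_of_modEq_of_abs_lt (r := 1) ?_ one_ne_zero (by simpa using hp1)
    exact Int.modEq_iff_dvd.mpr ⟨(p - r) * p ^ t - p ^ (s + 1 + t), by simp only [N]; ring⟩

lemma sum_Icc_one_ruzsaSeq_eq_one (hp : 1 < p) {d : ℕ} (hk : k = (p - 1) * d + 1) :
    ∑ l ∈ Icc 1 k, ruzsaSeq p k l = 1 := by
  rw [sum_Icc_one_ruzsaSeq_eq_add (by omega), ruzsaSeq_one hp hk, hk, Nat.add_sub_cancel,
    ← add_zero ((p - 1) * d), sum_range_ruzsaSeq_add_two hp _ (Nat.zero_le _)]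
  field_simp
  ring

end ruzsaSeq

theorem stmt_10 (p : ℕ) (hp : p.Prime) (k : ℕ) (hk : 1 < k)
    (hmod : k ≡ 1 [MOD p - 1]) :
    ∃ u : ℕ → ℚ,
      u = ruzsaSeq p k ∧
      (∀ i ∈ Finset.Icc 1 k, 0 < u i ∧ IsSUnit {p} (u i)) ∧
      ∑ i ∈ Finset.Icc 1 k, u i = 1 ∧
      (∀ i j : ℕ, 1 ≤ i → i < j → j ≤ k → (i, j) ≠ (1, k) →
        ¬ IsSUnit {p} (∑ l ∈ Finset.Icc i j, u l)) := by
  obtain ⟨d, hd⟩ := (Nat.modEq_iff_dvd' hk.le).mp hmod.symm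
  have hkd : k = (p - 1) * d + 1 := by omega
  refine ⟨_, rfl, fun i _ => ?_, sum_Icc_one_ruzsaSeq_eq_one hp.one_lt hkd, ?_⟩
  · obtain ⟨e, he⟩ := exists_ruzsaSeq_eq_inv_pow (p := p) (k := k) i
    rw [he]
    exact ⟨inv_pos.mpr (pow_pos (Nat.cast_pos.mpr hp.pos) e),
      isSUnit_inv_pow hp (mem_singleton_self p) e⟩
  · intro i j hi hij hjk hne
    rcases hi.eq_or_lt with rfl | hi
    · exact not_isSUnit_sum_Icc_one_ruzsaSeq hp hkd hij
        (hjk.lt_of_ne (by rintro rfl; exact hne rfl))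
    · exact not_isSUnit_sum_Icc_ruzsaSeq hp hi hij
end

section
/- Let S = {p_1, p_2, …, p_d} be a finite nonempty set of primes. For every positive integer k of the form k = a_1(p_1 − 1) + a_2(p_2 − 1) + ⋯ + a_d(p_d − 1) + 1 with nonnegative integers a_1, …, a_d, there exist positive S-units u_1, u_2, …, u_k such that u_1 + u_2 + ⋯ + u_k = 1. -/
/-!
Start from `1 = 1`. Given a decomposition of `1` into `m + 1` positive `S`-units and another
into `n + 1`, multiplying the second by one term of the first and substituting it for that term
gives a decomposition into `m + n + 1` terms. So the lengths `n` for which `1` is a sum of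
`n + 1` positive `S`-units form an additive submonoid of `ℕ`, and it contains `p - 1` for every
`p ∈ S` because `1 = p⁻¹ + ⋯ + p⁻¹`.
-/

theorem Rat.num_mul_dvd (x y : ℚ) : (x * y).num ∣ x.num * y.num := by
  conv_lhs => rw [← Rat.num_divInt_den x, ← Rat.num_divInt_den y, Rat.divInt_mul_divInt]
  exact Rat.num_dvd _ (by positivity)

theorem Multiset.exists_fin_map_univ_eq {α : Type*} (M : Multiset α) :
    ∃ f : Fin (card M) → α, map f Finset.univ.val = M := by
  refine ⟨fun i => M.toList[i.cast M.length_toList.symm], ?_⟩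
  rw [Fin.univ_val_map]
  conv_rhs => rw [← Multiset.coe_toList M]
  congr 1
  apply List.ext_getElem <;> simp

section SUnit

variable {S : Finset ℕ}

theorem isSUnit_one : IsSUnit S 1 := by
  refine ⟨one_ne_zero, fun r hr hdvd => ?_⟩
  rw [Rat.num_one, Rat.den_one] at hdvd
  rcases hdvd with h | h
  · exact absurd (Nat.dvd_one.mp (by exact_mod_cast h)) hr.ne_one
  · exact absurd (Nat.dvd_one.mp h) hr.ne_one

theorem IsSUnit.mul_s11 {x y : ℚ} (hx : IsSUnit S x) (hy : IsSUnit S y) : IsSUnit S (x * y) := by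
  refine ⟨mul_ne_zero hx.1 hy.1, fun r hr hdvd => ?_⟩
  rcases hdvd with h | h
  · rcases (Nat.prime_iff_prime_int.mp hr).dvd_or_dvd (h.trans (Rat.num_mul_dvd x y)) with h | h
    exacts [hx.2 r hr (.inl h), hy.2 r hr (.inl h)]
  · rcases hr.dvd_mul.mp (h.trans (Rat.mul_den_dvd x y)) with h | h
    exacts [hx.2 r hr (.inr h), hy.2 r hr (.inr h)]

theorem isSUnit_inv_prime {q : ℕ} (hq : q.Prime) (hqS : q ∈ S) : IsSUnit S (q : ℚ)⁻¹ := by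
  refine ⟨by simp [hq.ne_zero], fun r hr hdvd => ?_⟩
  rw [Rat.inv_natCast_num, Rat.inv_natCast_den, if_neg hq.ne_zero,
    Int.sign_natCast_of_ne_zero hq.ne_zero] at hdvd
  rcases hdvd with h | h
  · exact absurd (Nat.dvd_one.mp (by exact_mod_cast h)) hr.ne_one
  · rwa [(Nat.prime_dvd_prime_iff_eq hr hq).mp h]

def OneIsSumOfPosSUnits (S : Finset ℕ) (n : ℕ) : Prop :=
  ∃ M : Multiset ℚ, Multiset.card M = n ∧ (∀ u ∈ M, 0 < u ∧ IsSUnit S u) ∧ M.sum = 1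

theorem oneIsSumOfPosSUnits_one : OneIsSumOfPosSUnits S 1 :=
  ⟨{1}, rfl, by simpa using isSUnit_one, by simp⟩

theorem oneIsSumOfPosSUnits_prime {q : ℕ} (hq : q.Prime) (hqS : q ∈ S) :
    OneIsSumOfPosSUnits S q := by
  refine ⟨Multiset.replicate q (q : ℚ)⁻¹, Multiset.card_replicate _ _, fun u hu => ?_, ?_⟩
  · rw [Multiset.eq_of_mem_replicate hu]
    exact ⟨by simpa using hq.pos, isSUnit_inv_prime hq hqS⟩
  · rw [Multiset.sum_replicate, nsmul_eq_mul, mul_inv_cancel₀ (by exact_mod_cast hq.ne_zero)]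

theorem OneIsSumOfPosSUnits.subdivide {m n : ℕ} (hm : OneIsSumOfPosSUnits S (m + 1))
    (hn : OneIsSumOfPosSUnits S (n + 1)) : OneIsSumOfPosSUnits S (m + n + 1) := by
  obtain ⟨M, hMc, hMu, hMs⟩ := hm
  obtain ⟨N, hNc, hNu, hNs⟩ := hn
  obtain ⟨x, hx⟩ : ∃ x, x ∈ M := Multiset.card_pos_iff_exists_mem.mp (by omega)
  refine ⟨M.erase x + N.map (x * ·), ?_, fun u hu => ?_, ?_⟩
  · rw [Multiset.card_add, Multiset.card_erase_of_mem hx, Multiset.card_map, hMc, hNc,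
      Nat.pred_eq_sub_one]
    omega
  · rcases Multiset.mem_add.mp hu with hu | hu
    · exact hMu u (Multiset.mem_of_mem_erase hu)
    · obtain ⟨v, hv, rfl⟩ := Multiset.mem_map.mp hu
      exact ⟨mul_pos (hMu x hx).1 (hNu v hv).1, (hMu x hx).2.mul_s11 (hNu v hv).2⟩
  · rw [Multiset.sum_add, Multiset.sum_map_mul_left, Multiset.map_id', hNs, mul_one, add_comm,
      Multiset.sum_erase hx, hMs]

theorem OneIsSumOfPosSUnits.exists_fin {n : ℕ} (h : OneIsSumOfPosSUnits S n) :
    ∃ u : Fin n → ℚ, (∀ i, 0 < u i ∧ IsSUnit S (u i)) ∧ ∑ i, u i = 1 := by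
  obtain ⟨M, rfl, hMu, hMs⟩ := h
  obtain ⟨f, hf⟩ := M.exists_fin_map_univ_eq
  refine ⟨f, fun i => hMu _ (hf ▸ Multiset.mem_map_of_mem f (Finset.mem_univ i)), ?_⟩
  rw [Finset.sum_eq_multiset_sum, hf, hMs]

variable (S) in
/-- `n` belongs to it iff `1` is a sum of `n + 1` positive `S`-units. -/
def sUnitSumLengths : AddSubmonoid ℕ where
  carrier := {n | OneIsSumOfPosSUnits S (n + 1)}
  zero_mem' := oneIsSumOfPosSUnits_one
  add_mem' := OneIsSumOfPosSUnits.subdivide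

theorem prime_sub_one_mem_sUnitSumLengths {q : ℕ} (hq : q.Prime) (hqS : q ∈ S) :
    q - 1 ∈ sUnitSumLengths S := by
  change OneIsSumOfPosSUnits S (q - 1 + 1)
  rw [Nat.sub_add_cancel hq.one_lt.le]
  exact oneIsSumOfPosSUnits_prime hq hqS

end SUnit

theorem stmt_11_general (d : ℕ) (p : Fin d → ℕ) (hp : ∀ i, (p i).Prime)
    (a : Fin d → ℕ) (k : ℕ)
    (hk : k = ∑ i, a i * (p i - 1) + 1) :
    ∃ u : Fin k → ℚ,
      (∀ i, 0 < u i ∧ IsSUnit (Finset.univ.image p) (u i)) ∧ ∑ i, u i = 1 := by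
  have hmem : ∑ i, a i * (p i - 1) ∈ sUnitSumLengths (Finset.univ.image p) :=
    sum_mem fun i _ => nsmul_mem
      (prime_sub_one_mem_sUnitSumLengths (hp i) (Finset.mem_image_of_mem p (Finset.mem_univ i)))
      (a i)
  exact hk ▸ OneIsSumOfPosSUnits.exists_fin hmem

theorem stmt_11 (d : ℕ) (hd : 0 < d) (p : Fin d → ℕ) (hp : ∀ i, (p i).Prime)
    (hinj : Function.Injective p) (a : Fin d → ℕ) (k : ℕ)
    (hk : k = ∑ i, a i * (p i - 1) + 1) :
    ∃ u : Fin k → ℚ,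
      (∀ i, 0 < u i ∧ IsSUnit (Finset.univ.image p) (u i)) ∧ ∑ i, u i = 1 :=
  stmt_11_general d p hp a k hk
end

section
/- Let p be a prime and let u_1, u_2, …, u_n be nonzero integers such that each |u_i| is a power of p (i.e. u_i = ± p^{k_i} with k_i ≥ 0), u_1 + u_2 + ⋯ + u_n = 0, and no nonempty proper subfamily of the u_i sums to 0. Then either exactly one of the u_i is negative or exactly one of the u_i is positive. -/
/-!
Let `u i₀ = p ^ K` be an entry of largest absolute value, say positive. The negative entries
have absolute values at least `p ^ K` in total, and they are powers of `p` dividing `p ^ K`;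
in such a divisibility chain, greedily taking the largest terms hits `p ^ K` exactly. Those
negative entries together with `u i₀` form a zero-sum subfamily, hence the whole family, so
`u i₀` is the only positive entry.
-/

open Finset

theorem Finset.exists_subset_sum_eq_of_dvd_chain {ι : Type*} [DecidableEq ι] (f : ι → ℕ)
    (s : Finset ι) (hchain : ∀ i ∈ s, ∀ j ∈ s, f i ≤ f j → f i ∣ f j) {T : ℕ}
    (hdvd : ∀ i ∈ s, f i ∣ T) (hT : T ≤ ∑ i ∈ s, f i) :
    ∃ t ⊆ s, ∑ i ∈ t, f i = T := by
  induction s using Finset.induction_on_max_value f generalizing T with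
  | empty => exact ⟨∅, subset_rfl, by rw [sum_empty, nonpos_iff_eq_zero] at hT; exact hT.symm⟩
  | insert a s ha hmax ih =>
    rcases Nat.eq_zero_or_pos T with rfl | hTpos
    · exact ⟨∅, empty_subset _, sum_empty⟩
    have haT : f a ≤ T := Nat.le_of_dvd hTpos (hdvd a (mem_insert_self a s))
    obtain ⟨t, hts, ht⟩ : ∃ t ⊆ s, ∑ i ∈ t, f i = T - f a := by
      refine ih (fun i hi j hj => hchain i (mem_insert_of_mem hi) j (mem_insert_of_mem hj))
        (fun i hi => Nat.dvd_sub (hdvd i (mem_insert_of_mem hi)) ?_) ?_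
      · exact hchain i (mem_insert_of_mem hi) a (mem_insert_self a s) (hmax i hi)
      · rw [sum_insert ha] at hT
        omega
    refine ⟨insert a t, insert_subset_insert a hts, ?_⟩
    rw [sum_insert fun hat => ha (hts hat), ht]
    omega

theorem existsUnique_pos_of_minimal_zero_sum {ι : Type*} [Fintype ι] [DecidableEq ι]
    {p : ℕ} (hp : 0 < p) (u : ι → ℤ) (hpow : ∀ i, ∃ k, (u i).natAbs = p ^ k)
    (hsum : ∑ i, u i = 0)
    (hnd : ∀ t : Finset ι, t.Nonempty → t ≠ univ → ∑ i ∈ t, u i ≠ 0)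
    {i₀ : ι} (hi₀ : 0 < u i₀) (hmax : ∀ i, |u i| ≤ u i₀) :
    ∃! i, 0 < u i := by
  set N := univ.filter fun i => u i < 0
  have hsum_natAbs : ∀ t ⊆ N, ∑ i ∈ t, ((u i).natAbs : ℤ) = -∑ i ∈ t, u i := fun t htN => by
    rw [← sum_neg_distrib]
    exact sum_congr rfl fun i hi => Int.ofNat_natAbs_of_nonpos (mem_filter.mp (htN hi)).2.le
  have hN : u i₀ ≤ ∑ i ∈ N, ((u i).natAbs : ℤ) := by
    have hsplit := sum_filter_add_sum_filter_not univ (fun i => u i < 0) u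
    have hpos : u i₀ ≤ ∑ i ∈ univ.filter (fun i => ¬ u i < 0), u i :=
      single_le_sum (f := u) (fun i hi => not_lt.mp (mem_filter.mp hi).2)
        (mem_filter.mpr ⟨mem_univ _, hi₀.not_gt⟩)
    linarith [hsum_natAbs N subset_rfl]
  have hdvd_of_le : ∀ i j, (u i).natAbs ≤ (u j).natAbs → (u i).natAbs ∣ (u j).natAbs := by
    intro i j hij
    obtain ⟨k, hk⟩ := hpow i
    obtain ⟨l, hl⟩ := hpow j
    rw [hk, hl] at hij ⊢
    exact (Nat.pow_dvd_pow_iff_pow_le_pow hp).mpr hij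
  obtain ⟨t, htN, ht⟩ := exists_subset_sum_eq_of_dvd_chain (fun i => (u i).natAbs) N
    (fun i _ j _ => hdvd_of_le i j) (T := (u i₀).natAbs)
    (fun i _ => hdvd_of_le i i₀ (by have := hmax i; rw [← Int.natCast_natAbs] at this; omega))
    (by rw [← Nat.cast_sum] at hN; omega)
  have hi₀t : i₀ ∉ t := fun h => hi₀.not_gt (mem_filter.mp (htN h)).2
  have hzero : ∑ i ∈ insert i₀ t, u i = 0 := by
    have := hsum_natAbs t htN
    rw [← Nat.cast_sum, ht] at this
    rw [sum_insert hi₀t]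
    omega
  have huniv : insert i₀ t = univ := by
    by_contra h
    exact hnd _ (insert_nonempty i₀ t) h hzero
  refine ⟨i₀, hi₀, fun j hj => ?_⟩
  by_contra hne
  have hjt : j ∈ t := (mem_insert.mp (huniv ▸ mem_univ j)).resolve_left hne
  exact hj.not_gt (mem_filter.mp (htN hjt)).2

theorem stmt_12 (p : ℕ) (hp : p.Prime) (n : ℕ) (hn : 2 ≤ n) (u : Fin n → ℤ)
    (hpow : ∀ i, ∃ k : ℕ, u i = (p : ℤ) ^ k ∨ u i = -((p : ℤ) ^ k))
    (hsum : ∑ i, u i = 0)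
    (hnd : ∀ t : Finset (Fin n), t.Nonempty → t ≠ Finset.univ →
      ∑ i ∈ t, u i ≠ 0) :
    (∃! i, u i < 0) ∨ (∃! i, 0 < u i) := by
  have hpow' : ∀ i, ∃ k, (u i).natAbs = p ^ k := fun i => by
    obtain ⟨k, hk | hk⟩ := hpow i <;> exact ⟨k, by simp [hk]⟩
  have : Nonempty (Fin n) := ⟨⟨0, by omega⟩⟩
  obtain ⟨i₀, hmax⟩ := Finite.exists_max fun i => |u i|
  have hi₀ : u i₀ ≠ 0 := by
    obtain ⟨k, hk⟩ := hpow' i₀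
    exact Int.natAbs_ne_zero.mp (hk ▸ (pow_pos hp.pos k).ne')
  rcases hi₀.lt_or_gt with hneg | hpos
  · left
    have := existsUnique_pos_of_minimal_zero_sum hp.pos (fun i => -u i)
      (by simpa only [Int.natAbs_neg] using hpow') (by simp [hsum])
      (fun t ht htu => by simpa [sum_neg_distrib] using hnd t ht htu) (neg_pos.mpr hneg)
      (fun i => by simpa [abs_of_neg hneg] using hmax i)
    simpa only [neg_pos] using this
  · exact Or.inr <| existsUnique_pos_of_minimal_zero_sum hp.pos u hpow' hsum hnd hpos
      fun i => abs_of_pos hpos ▸ hmax i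
end

section
/- Let p and q be primes with p > q, and let r be a positive integer. Then there exist positive integers α and β such that r·q^β > p^α > (r − 1)·q^β. -/
/-!
Since `log p / log q` is irrational, the multiples of `log p` are dense in `ℝ / (log q) ℤ`, and
since the circle is compact every point is a cluster point of `n • log p` as `n → ∞`. Hence for
large `n` and a suitable `k` the number `n log p - k log q` lies in `(log (r - 1/2), log r)`, i.e.
`p ^ n / q ^ k ∈ (r - 1/2, r)`; as `p ^ n > r`, the exponent `k` is positive. The left end
`r - 1/2` instead of `r - 1` keeps the interval away from `0`, also when `r = 1`.
-/

open Real Set Filter Topology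

theorem irrational_log_div_log_of_prime {p q : ℕ} (hp : p.Prime) (hq : q.Prime) (hpq : p ≠ q) :
    Irrational (log p / log q) := by
  have hlogp : 0 < log p := log_pos (by exact_mod_cast hp.one_lt)
  have hlogq : 0 < log q := log_pos (by exact_mod_cast hq.one_lt)
  rintro ⟨x, hx⟩
  have hx_pos : 0 < x := by exact_mod_cast hx ▸ div_pos hlogp hlogq
  obtain ⟨m, hm⟩ : ∃ m : ℕ, (m : ℤ) = x.num :=
    ⟨x.num.toNat, Int.toNat_of_nonneg (Rat.num_nonneg.2 hx_pos.le)⟩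
  have hm0 : m ≠ 0 := by
    rintro rfl
    exact (Rat.num_pos.2 hx_pos).ne' hm.symm
  have hden_mul : (x.den : ℝ) * x = m := by
    have := Rat.den_mul_eq_num x
    rw [← hm] at this
    exact_mod_cast this
  have hlog : log ((p : ℝ) ^ x.den) = log ((q : ℝ) ^ m) := by
    rw [log_pow, log_pow, ← hden_mul, hx]
    field_simp
  have hpow : p ^ x.den = q ^ m := by
    have hp0 : (0 : ℝ) < p := by exact_mod_cast hp.pos
    have hq0 : (0 : ℝ) < q := by exact_mod_cast hq.pos
    exact_mod_cast log_injOn_pos (mem_Ioi.2 (pow_pos hp0 _)) (mem_Ioi.2 (pow_pos hq0 _)) hlog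
  exact hpq (hp.pow_inj' hq x.den_ne_zero hm0 hpow).1

theorem exists_nat_sub_int_mul_mem_Ioo {a b : ℝ} (hb : 0 < b) (h : Irrational (a / b))
    {c d : ℝ} (hcd : c < d) (N : ℕ) :
    ∃ n ≥ N, ∃ k : ℤ, n * a - k * b ∈ Ioo c d := by
  have : Fact (0 < b) := ⟨hb⟩
  have hdense : DenseRange (· • (a : AddCircle b) : ℤ → AddCircle b) :=
    AddCircle.denseRange_zsmul_coe_iff.2 h
  set t : AddCircle b := (((c + d) / 2 : ℝ) : AddCircle b)
  have hcluster : MapClusterPt t atTop (· • (a : AddCircle b) : ℕ → AddCircle b) :=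
    ((mapClusterPt_atTop_nsmul_tfae t _).out 0 3).2 (hdense.closure_eq ▸ mem_univ t)
  have hU : ((↑) : ℝ → AddCircle b) '' Ioo c d ∈ 𝓝 t :=
    QuotientAddGroup.isOpenMap_coe.image_mem_nhds (isOpen_Ioo.mem_nhds ⟨by linarith, by linarith⟩)
  obtain ⟨n, hnN, y, hy, hny⟩ := frequently_atTop.1 (mapClusterPt_iff_frequently.1 hcluster _ hU) N
  obtain ⟨k, hk⟩ := (AddCircle.coe_eq_zero_iff b).1 (sub_eq_zero.2 hny.symm)
  refine ⟨n, hnN, k, ?_⟩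
  have hk' : (n : ℝ) * a - k * b = y := by
    simp only [zsmul_eq_mul, nsmul_eq_mul] at hk
    linarith
  exact hk' ▸ hy

theorem exists_pow_div_zpow_mem_Ioo {x y : ℝ} (hx : 0 < x) (hy : 1 < y)
    (h : Irrational (log x / log y)) {u v : ℝ} (hu : 0 < u) (huv : u < v) (N : ℕ) :
    ∃ n ≥ N, ∃ k : ℤ, x ^ n / y ^ k ∈ Ioo u v := by
  obtain ⟨n, hnN, k, hlo, hhi⟩ :=
    exists_nat_sub_int_mul_mem_Ioo (log_pos hy) h (log_lt_log hu huv) N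
  have hpos : 0 < x ^ n / y ^ k := by positivity
  have hlog : log (x ^ n / y ^ k) = n * log x - k * log y := by
    rw [log_div (by positivity) (by positivity), log_pow, log_zpow]
  refine ⟨n, hnN, k, ?_, ?_⟩
  · rwa [← log_lt_log_iff hu hpos, hlog]
  · rwa [← log_lt_log_iff hpos (hu.trans huv), hlog]

theorem stmt_13 (p q : ℕ) (hp : p.Prime) (hq : q.Prime) (hpq : q < p)
    (r : ℕ) (hr : 0 < r) :
    ∃ α β : ℕ, 0 < α ∧ 0 < β ∧
      r * q ^ β > p ^ α ∧ p ^ α > (r - 1) * q ^ β := by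
  have hq1 : (1 : ℝ) < q := by exact_mod_cast hq.one_lt
  have hr1 : (1 : ℝ) ≤ r := by exact_mod_cast hr
  obtain ⟨α, hα, k, hlo, hhi⟩ := exists_pow_div_zpow_mem_Ioo (by exact_mod_cast hp.pos) hq1
    (irrational_log_div_log_of_prime hp hq hpq.ne') (u := r - 1 / 2) (v := r) (by linarith)
    (by linarith) r
  have hr_lt : (r : ℝ) < (p : ℝ) ^ α := by
    exact_mod_cast (Nat.lt_pow_self hp.one_lt).trans_le (Nat.pow_le_pow_right hp.pos hα)
  have hk : 0 < k := by
    by_contra! hk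
    have hdiv : (p : ℝ) ^ α ≤ p ^ α / q ^ k :=
      le_div_self (by positivity) (by positivity) (zpow_le_one_of_nonpos₀ hq1.le hk)
    linarith
  lift k to ℕ using hk.le with β
  rw [zpow_natCast, lt_div_iff₀ (by positivity)] at hlo
  rw [zpow_natCast, div_lt_iff₀ (by positivity)] at hhi
  refine ⟨α, β, by omega, by exact_mod_cast hk, by exact_mod_cast hhi, ?_⟩
  have : ((r - 1 : ℕ) : ℝ) * q ^ β < p ^ α :=
    calc ((r - 1 : ℕ) : ℝ) * q ^ β = (r - 1) * q ^ β := by rw [Nat.cast_sub hr, Nat.cast_one]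
      _ ≤ (r - 1 / 2) * q ^ β := by gcongr; linarith
      _ < p ^ α := hlo
  exact_mod_cast this
end

section
/- Let S be a finite nonempty set of primes. There exist S-units a and b such that whenever c_0, c_1, c_2 ∈ {−1, 0, 1} and c_0 + c_1·a + c_2·b is an S-unit, then (c_0, c_1, c_2) is one of the six tuples (1, 0, 0), (−1, 0, 0), (0, 1, 0), (0, −1, 0), (0, 0, 1), (0, 0, −1). -/
theorem isSUnit_intCast_iff {S : Finset ℕ} {n : ℤ} :
    IsSUnit S n ↔ n ≠ 0 ∧ ∀ p : ℕ, p.Prime → (p : ℤ) ∣ n → p ∈ S := by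
  simp only [IsSUnit, Rat.num_intCast, Rat.den_intCast, Nat.dvd_one, ne_eq, Int.cast_eq_zero]
  refine and_congr_right fun _ => forall_congr' fun p => forall_congr' fun hp => ?_
  simp [hp.ne_one]

theorem IsSUnit.pow {S : Finset ℕ} {u : ℚ} (hu : IsSUnit S u) (k : ℕ) : IsSUnit S (u ^ k) := by
  refine ⟨pow_ne_zero k hu.1, fun p hp hdvd => hu.2 p hp ?_⟩
  rw [Rat.num_pow, Rat.den_pow] at hdvd
  exact hdvd.imp (Int.Prime.dvd_pow' hp) hp.dvd_of_dvd_pow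

theorem IsSUnit.of_intCast_mul {S : Finset ℕ} {m n : ℤ} (h : IsSUnit S ((m * n : ℤ) : ℚ)) :
    IsSUnit S n := by
  rw [isSUnit_intCast_iff] at h ⊢
  exact ⟨right_ne_zero_of_mul h.1, fun p hp hpn => h.2 p hp (hpn.mul_left m)⟩

theorem isSUnit_prod {S : Finset ℕ} (hP : ∀ p ∈ S, p.Prime) :
    IsSUnit S ((∏ q ∈ S, (q : ℤ) : ℤ) : ℚ) := by
  refine isSUnit_intCast_iff.mpr ⟨Finset.prod_ne_zero_iff.mpr fun q hq => ?_, fun p hp hdvd => ?_⟩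
  · exact_mod_cast (hP q hq).ne_zero
  · obtain ⟨q, hq, hpq⟩ := (Nat.prime_iff_prime_int.mp hp).dvd_finsetProd_iff _ |>.mp hdvd
    rwa [(Nat.prime_dvd_prime_iff_eq hp (hP q hq)).mp (Int.natCast_dvd_natCast.mp hpq)]

/-- Every prime factor of `c + N m` lies in `S` and divides `N`, hence divides the unit `c`. -/
theorem isUnit_of_isSUnit_add_mul {S : Finset ℕ} {c N m : ℤ} (hc : IsUnit c)
    (hN : ∀ q ∈ S, (q : ℤ) ∣ N) (h : IsSUnit S ((c + N * m : ℤ) : ℚ)) : IsUnit (c + N * m) := by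
  rw [isSUnit_intCast_iff] at h
  by_contra hu
  obtain ⟨p, hp, hpd⟩ := Nat.exists_prime_and_dvd (mt Int.isUnit_iff_natAbs_eq.mpr hu)
  have hpn : (p : ℤ) ∣ c + N * m := Int.natCast_dvd.mpr hpd
  have hpc : (p : ℤ) ∣ c := (dvd_add_left ((hN p (h.2 p hp hpn)).mul_right m)).mp hpn
  exact (Nat.prime_iff_prime_int.mp hp).not_isUnit (isUnit_of_dvd_unit hpc hc)

theorem eq_zero_of_isUnit_add_mul {c N m : ℤ} (hN : 3 ≤ N) (hc : IsUnit c)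
    (h : IsUnit (c + N * m)) : m = 0 := by
  rw [Int.isUnit_iff] at hc h
  have hNm : N * m = 0 := Int.eq_zero_of_abs_lt_dvd (dvd_mul_right N m) (by rw [abs_lt]; omega)
  exact (mul_eq_zero.mp hNm).resolve_left (by omega)

theorem mem_signed_basis_of_isSUnit {S : Finset ℕ} {N : ℤ} (hN : 3 ≤ N)
    (hSN : ∀ q ∈ S, (q : ℤ) ∣ N) {c₀ c₁ c₂ : ℤ} (h₀ : c₀ ∈ ({-1, 0, 1} : Set ℤ))
    (h₁ : c₁ ∈ ({-1, 0, 1} : Set ℤ)) (h₂ : c₂ ∈ ({-1, 0, 1} : Set ℤ))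
    (hU : IsSUnit S ((c₀ + N * (c₁ + N * c₂) : ℤ) : ℚ)) :
    (c₀, c₁, c₂) ∈ ({(1, 0, 0), (-1, 0, 0), (0, 1, 0), (0, -1, 0),
      (0, 0, 1), (0, 0, -1)} : Set (ℤ × ℤ × ℤ)) := by
  simp only [Set.mem_insert_iff, Set.mem_singleton_iff, Prod.mk.injEq] at h₀ h₁ h₂ ⊢
  have hN₀ : N ≠ 0 := by omega
  have isUnit_of_ne_zero : ∀ c : ℤ, c = -1 ∨ c = 0 ∨ c = 1 → c ≠ 0 → IsUnit c := by
    rintro c (rfl | rfl | rfl) hc <;> simp_all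
  by_cases hc₀ : c₀ = 0
  · subst hc₀
    rw [zero_add] at hU
    by_cases hc₁ : c₁ = 0
    · have hc₂ : c₂ ≠ 0 := by
        rintro rfl
        exact hU.1 (by simp [hc₁])
      omega
    · have hunit := isUnit_of_ne_zero c₁ h₁ hc₁
      have hc₂ := eq_zero_of_isUnit_add_mul hN hunit
        (isUnit_of_isSUnit_add_mul hunit hSN hU.of_intCast_mul)
      omega
  · have hunit := isUnit_of_ne_zero c₀ h₀ hc₀
    have hm := eq_zero_of_isUnit_add_mul hN hunit (isUnit_of_isSUnit_add_mul hunit hSN hU)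
    have hc₁ : c₁ = 0 :=
      Int.eq_zero_of_abs_lt_dvd (m := N) ⟨-c₂, by rw [mul_neg]; omega⟩ (by rw [abs_lt]; omega)
    have hc₂ : c₂ = 0 := (mul_eq_zero.mp (by omega : N * c₂ = 0)).resolve_left hN₀
    omega

theorem stmt_15 (S : Finset ℕ) (hS : S.Nonempty) (hP : ∀ p ∈ S, p.Prime) :
    ∃ a b : ℚ, IsSUnit S a ∧ IsSUnit S b ∧
      ∀ c₀ c₁ c₂ : ℤ, c₀ ∈ ({-1, 0, 1} : Set ℤ) → c₁ ∈ ({-1, 0, 1} : Set ℤ) →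
        c₂ ∈ ({-1, 0, 1} : Set ℤ) →
        IsSUnit S ((c₀ : ℚ) + (c₁ : ℚ) * a + (c₂ : ℚ) * b) →
        (c₀, c₁, c₂) ∈ ({(1, 0, 0), (-1, 0, 0), (0, 1, 0), (0, -1, 0),
          (0, 0, 1), (0, 0, -1)} : Set (ℤ × ℤ × ℤ)) := by
  set P : ℤ := ∏ q ∈ S, (q : ℤ)
  obtain ⟨q₀, hq₀⟩ := hS
  have hdvd : ∀ q ∈ S, (q : ℤ) ∣ P ^ 2 := fun q hq =>
    dvd_pow (Finset.dvd_prod_of_mem _ hq) two_ne_zero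
  have hP2 : 2 ≤ P := le_trans (by exact_mod_cast (hP q₀ hq₀).two_le) <|
    Int.le_of_dvd (Finset.prod_pos fun q hq => by exact_mod_cast (hP q hq).pos)
      (Finset.dvd_prod_of_mem _ hq₀)
  refine ⟨(P : ℚ) ^ 2, (P : ℚ) ^ 4, (isSUnit_prod hP).pow 2, (isSUnit_prod hP).pow 4, ?_⟩
  intro c₀ c₁ c₂ h₀ h₁ h₂ hU
  refine mem_signed_basis_of_isSUnit (N := P ^ 2) (by nlinarith) hdvd h₀ h₁ h₂ ?_
  convert hU using 2
  push_cast
  ring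
end

section
/- Let S be a finite nonempty set of primes and let R be a finite set of rational numbers. Then there exists an S-unit a such that a ∉ R and such that for all v, w ∈ R, if a + v − w is an S-unit then v = w. -/
open Filter

theorem Rat.num_intCast_add (n : ℤ) (q : ℚ) : ((n : ℚ) + q).num = n * q.den + q.num := by
  have h := Rat.mul_den_eq_num ((n : ℚ) + q)
  rw [Rat.intCast_add_den, add_mul, Rat.mul_den_eq_num] at h
  exact_mod_cast h.symm

theorem isSUnit_prod_pow (S : Finset ℕ) (hP : ∀ p ∈ S, p.Prime) (N : ℕ) :
    IsSUnit S (((∏ p ∈ S, (p : ℤ)) ^ N : ℤ) : ℚ) := by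
  refine ⟨Int.cast_ne_zero.2 (pow_ne_zero N (Finset.prod_ne_zero_iff.2 fun p hp =>
    Nat.cast_ne_zero.2 (hP p hp).ne_zero)), ?_⟩
  rintro q hq (hdvd | hdvd)
  · rw [Rat.num_intCast] at hdvd
    have hq' := Nat.prime_iff_prime_int.1 hq
    obtain ⟨p, hpS, hqp⟩ := hq'.exists_mem_finset_dvd (hq'.dvd_of_dvd_pow hdvd)
    rwa [(Nat.prime_dvd_prime_iff_eq hq (hP p hpS)).1 (Int.natCast_dvd_natCast.1 hqp)]
  · rw [Rat.den_intCast, Nat.dvd_one] at hdvd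
    exact absurd hdvd hq.ne_one

theorem dvd_of_eq_prod_pow_mul_add {S : Finset ℕ} {x m n : ℤ} {N : ℕ}
    (hx : x = (∏ p ∈ S, (p : ℤ)) ^ N * m + n)
    (hxS : ∀ ℓ : ℕ, ℓ.Prime → (ℓ : ℤ) ∣ x → ℓ ∈ S) (hn : |n| < 2 ^ N) : x ∣ n := by
  rw [← Int.natAbs_dvd_natAbs, Nat.dvd_iff_prime_pow_dvd_dvd]
  intro ℓ k hℓ hk
  rw [← Int.natCast_dvd, Nat.cast_pow] at hk ⊢
  rcases Nat.eq_zero_or_pos k with rfl | hk0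
  · simp
  have hℓP : (ℓ : ℤ) ∣ ∏ p ∈ S, (p : ℤ) :=
    Finset.dvd_prod_of_mem _ (hxS ℓ hℓ ((dvd_pow_self _ hk0.ne').trans hk))
  have hdvd : ∀ j ≤ k, j ≤ N → (ℓ : ℤ) ^ j ∣ n := fun j hjk hjN => by
    have h₁ : (ℓ : ℤ) ^ j ∣ x := (pow_dvd_pow _ hjk).trans hk
    have h₂ : (ℓ : ℤ) ^ j ∣ (∏ p ∈ S, (p : ℤ)) ^ N * m :=
      ((pow_dvd_pow _ hjN).trans (pow_dvd_pow_of_dvd hℓP N)).mul_right m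
    simpa [hx] using (dvd_sub h₁ h₂)
  rcases le_or_gt k N with hkN | hNk
  · exact hdvd k le_rfl hkN
  -- `ℓ ^ N` cannot divide the small number `n` unless `n = 0`
  obtain rfl | hn0 := eq_or_ne n 0
  · exact dvd_zero _
  have h := Int.le_of_dvd (abs_pos.2 hn0) ((dvd_abs _ _).2 (hdvd N hNk.le le_rfl))
  have : (2 : ℤ) ^ N ≤ (ℓ : ℤ) ^ N := pow_le_pow_left₀ (by norm_num) (by exact_mod_cast hℓ.two_le) N
  linarith

theorem not_isSUnit_prod_pow_add {S : Finset ℕ} (hP : 2 ≤ ∏ p ∈ S, (p : ℤ)) {d : ℚ} (hd : d ≠ 0)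
    {N : ℕ} (hN : 2 * |d.num| < 2 ^ N) :
    ¬ IsSUnit S (((∏ p ∈ S, (p : ℤ)) ^ N : ℤ) + d) := by
  intro hu
  set P := ∏ p ∈ S, (p : ℤ)
  set x := P ^ N * d.den + d.num with hx
  have hxS : ∀ ℓ : ℕ, ℓ.Prime → (ℓ : ℤ) ∣ x → ℓ ∈ S := fun ℓ hℓ h =>
    hu.2 ℓ hℓ (Or.inl (by rwa [Rat.num_intCast_add]))
  have hn0 : d.num ≠ 0 := Rat.num_ne_zero.2 hd
  have hxn : |x| ≤ |d.num| := Int.le_of_dvd (abs_pos.2 hn0)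
    ((abs_dvd_abs _ _).2 (dvd_of_eq_prod_pow_mul_add hx hxS (by linarith [abs_nonneg d.num])))
  have hPN : 2 ^ N ≤ P ^ N := pow_le_pow_left₀ (by norm_num) hP N
  have hden : P ^ N ≤ P ^ N * d.den :=
    le_mul_of_one_le_right (by positivity) (by exact_mod_cast d.pos)
  have hsplit : P ^ N * d.den ≤ |x| + |d.num| := by
    calc (P ^ N * d.den : ℤ) = x - d.num := by rw [hx]; ring
      _ ≤ |x - d.num| := le_abs_self _
      _ ≤ |x| + |d.num| := abs_sub _ _
  linarith

theorem stmt_16 (S : Finset ℕ) (hS : S.Nonempty) (hP : ∀ p ∈ S, p.Prime)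
    (R : Finset ℚ) :
    ∃ a : ℚ, IsSUnit S a ∧ a ∉ R ∧
      ∀ v ∈ R, ∀ w ∈ R, IsSUnit S (a + v - w) → v = w := by
  have hP2 : 2 ≤ ∏ p ∈ S, (p : ℤ) := by
    obtain ⟨p, hp⟩ := hS
    have hpP : p ≤ ∏ q ∈ S, q := Finset.single_le_prod' (fun q hq => (hP q hq).one_le) hp
    rw [← Nat.cast_prod]
    exact_mod_cast (hP p hp).two_le.trans hpP
  set P := ∏ p ∈ S, (p : ℤ)
  have hR : ∀ᶠ N in atTop, ∀ r ∈ R, r < (2 : ℚ) ^ N := (eventually_all_finset R).2 fun r _ =>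
    (tendsto_pow_atTop_atTop_of_one_lt one_lt_two).eventually_gt_atTop r
  have hD : ∀ᶠ N in atTop, ∀ vw ∈ R.offDiag, 2 * |(vw.1 - vw.2).num| < (2 : ℤ) ^ N :=
    (eventually_all_finset _).2 fun vw _ =>
      (tendsto_pow_atTop_atTop_of_one_lt one_lt_two).eventually_gt_atTop _
  obtain ⟨N, hNR, hNd⟩ := (hR.and hD).exists
  refine ⟨((P ^ N : ℤ) : ℚ), isSUnit_prod_pow S hP N, fun haR => ?_, fun v hv w hw hu => ?_⟩
  · have : (2 : ℚ) ^ N ≤ ((P ^ N : ℤ) : ℚ) := by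
      exact_mod_cast pow_le_pow_left₀ (by norm_num) hP2 N
    linarith [hNR _ haR]
  · by_contra hvw
    rw [add_sub_assoc] at hu
    exact not_isSUnit_prod_pow_add hP2 (sub_ne_zero.2 hvw)
      (hNd (v, w) (Finset.mem_offDiag.2 ⟨hv, hw, hvw⟩)) hu
end
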